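/- arXiv:2010.11658 — 8 statements merged into one kernel-verified Lean document; each statement's English description precedes it below -/
import Mathlib

section
/- Let s ≥ 1 and k ≥ 1 be integers, let D : X → Y ∪ {⊥} be a database, let x = (x_1,…,x_k) ∈ X^k have pairwise distinct entries, and let r = (r_1,…,r_k), u = (u_1,…,u_k) ∈ (Y ∪ {⊥})^k. Define L^{D,x} := {y ∈ Y : there exists x̄ ∈ X with y ◁ x̄ and (D(x̄) ≠ ⊥ or x̄ ∈ {x_1,…,x_k})}. If D[x↦r] ∉ CHN^s and D[x↦u] ∈ CHN^{s+1}, then there exists an index i ∈ {1,…,k} with r_i ≠ u_i and u_i ∈ L^{D,x}. -/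
/- `D[x↦r]`: the database redefined at the (pairwise distinct) points `x 0, …, x (k-1)`
to take the values `r 0, …, r (k-1)`, and agreeing with `D` elsewhere.
`⊥` is modeled by `none`. -/
open Classical in
noncomputable def dbUpdate {X Y : Type*} {k : ℕ} (D : X → Option Y)
    (x : Fin k → X) (r : Fin k → Option Y) : X → Option Y :=
  fun a => if h : ∃ i, x i = a then r h.choose else D a

/- `CHN rel s`: the set of databases `D` for which there exist `x_0, …, x_s` with
`D x_{i-1} ∈ Y` and `rel (D x_{i-1}) (x_i)` for all `1 ≤ i ≤ s`. -/
def CHN {X Y : Type*} (rel : Y → X → Prop) (s : ℕ) : Set (X → Option Y) :=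
  {D | ∃ xs : Fin (s + 1) → X, ∀ i : Fin s, ∃ y : Y,
    D (xs i.castSucc) = some y ∧ rel y (xs i.succ)}

theorem stmt_0 {X Y : Type*} (rel : Y → X → Prop) (s k : ℕ) (hs : 1 ≤ s) (hk : 1 ≤ k)
    (D : X → Option Y) (x : Fin k → X) (hx : Function.Injective x)
    (r u : Fin k → Option Y)
    (hr : dbUpdate D x r ∉ CHN rel s)
    (hu : dbUpdate D x u ∈ CHN rel (s + 1)) :
    ∃ i : Fin k, r i ≠ u i ∧ ∃ y : Y, u i = some y ∧
      ∃ xb : X, rel y xb ∧ (D xb ≠ none ∨ ∃ j : Fin k, x j = xb) := by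
  obtain ⟨xs, hxs⟩ := hu
  -- If Dr agrees with Du on the first s chain points, Dr ∈ CHN rel s, contradiction.
  by_cases hagree : ∀ i : Fin s, dbUpdate D x r (xs i.castSucc.castSucc)
      = dbUpdate D x u (xs i.castSucc.castSucc)
  · exfalso
    apply hr
    refine ⟨fun j => xs j.castSucc, fun i => ?_⟩
    obtain ⟨y, hy1, hy2⟩ := hxs i.castSucc
    refine ⟨y, ?_, ?_⟩
    · rw [hagree i]; exact hy1
    · have : (i.castSucc).succ = (i.succ).castSucc := by
        apply Fin.ext; simp
      show rel y (xs i.succ.castSucc); rw [← this]; exact hy2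
  · push_neg at hagree
    obtain ⟨i, hi⟩ := hagree
    set a := xs i.castSucc.castSucc with ha
    -- Dr and Du only differ on points in the range of x
    have hex : ∃ j, x j = a := by
      by_contra hne
      apply hi
      simp only [dbUpdate, dif_neg hne]
    obtain ⟨y, hy1, hy2⟩ := hxs i.castSucc
    have hchoose : x hex.choose = a := hex.choose_spec
    have hru : dbUpdate D x r a = r hex.choose ∧ dbUpdate D x u a = u hex.choose := by
      constructor <;> simp only [dbUpdate, dif_pos hex]
    refine ⟨hex.choose, ?_, y, ?_, xs i.castSucc.succ, hy2, ?_⟩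
    · intro h; apply hi; rw [hru.1, hru.2, h]
    · rw [← hru.2]; exact hy1
    · have hsuccsucc : i.castSucc.succ = (i.succ : Fin (s+1)).castSucc := by
        apply Fin.ext; simp
      by_cases hex2 : ∃ j, x j = xs i.castSucc.succ
      · exact Or.inr hex2
      · left
        obtain ⟨y', hy1', _⟩ := hxs i.succ
        rw [← hsuccsucc] at hy1'
        have : dbUpdate D x u (xs i.castSucc.succ) = D (xs i.castSucc.succ) := by
          simp only [dbUpdate, dif_neg hex2]
        rw [← this, hy1']
        simp
end

section
/- Let Y be finite and nonempty with M := |Y|, let k ≥ 1 and s ≥ 1 be integers, let D be a database with D ∈ SIZE[k(s−1)] and D ∉ CHN^s, and let x ∈ X^k have pairwise distinct entries. If U is uniformly distributed on Y^k, then the probability that D[x↦U] ∈ CHN^{s+1} is at most k²·s·T/M; equivalently, |{u ∈ Y^k : D[x↦u] ∈ CHN^{s+1}}| ≤ k²·s·T·M^{k−1}. -/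
/- `SIZE s`: the databases with at most `s` non-`⊥` entries. -/
def SIZE {X Y : Type*} (s : ℕ) : Set (X → Option Y) :=
  {D | {a | D a ≠ none}.Finite ∧ {a | D a ≠ none}.ncard ≤ s}

lemma dbUpdate_apply_mem {X Y : Type*} {k : ℕ} (D : X → Option Y)
    (x : Fin k → X) (hx : Function.Injective x) (r : Fin k → Option Y) (j : Fin k) :
    dbUpdate D x r (x j) = r j := by
  unfold dbUpdate
  have h : ∃ i, x i = x j := ⟨j, rfl⟩
  rw [dif_pos h]
  congr 1
  exact hx h.choose_spec

lemma dbUpdate_apply_not_mem {X Y : Type*} {k : ℕ} (D : X → Option Y)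
    (x : Fin k → X) (r : Fin k → Option Y) {a : X} (ha : ∀ j, x j ≠ a) :
    dbUpdate D x r a = D a := by
  unfold dbUpdate
  rw [dif_neg]
  push_neg
  exact ha

lemma card_filter_comp {Y : Type*} [Fintype Y] {k : ℕ} (hk : 1 ≤ k) (j : Fin k)
    (P : Y → Prop) [DecidablePred P] :
    (Finset.univ.filter fun uu : Fin k → Y => P (uu j)).card
      = (Finset.univ.filter P).card * Fintype.card Y ^ (k - 1) := by
  classical
  rw [← Fintype.card_subtype, ← Fintype.card_subtype]
  have e : {uu : Fin k → Y // P (uu j)} ≃ {y : Y // P y} × ({i : Fin k // i ≠ j} → Y) :=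
    { toFun := fun uu => (⟨uu.1 j, uu.2⟩, fun i => uu.1 i.1)
      invFun := fun p => ⟨fun i => if h : i = j then p.1.1 else p.2 ⟨i, h⟩, by simp [p.1.2]⟩
      left_inv := by
        rintro ⟨uu, h⟩
        ext i
        dsimp
        split
        · subst ‹i = j›; rfl
        · rfl
      right_inv := by
        rintro ⟨⟨y, hy⟩, g⟩
        ext i
        · simp
        · simp [i.2] }
  rw [Fintype.card_congr e, Fintype.card_prod, Fintype.card_fun]
  congr 1
  have : Fintype.card {i : Fin k // i ≠ j} = k - 1 := by
    rw [Fintype.card_subtype_compl, Fintype.card_subtype_eq, Fintype.card_fin]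
  rw [this]

theorem stmt_1 {X Y : Type*} [Fintype Y] [Nonempty Y] (rel : Y → X → Prop)
    (T k s : ℕ) (hk : 1 ≤ k) (hs : 1 ≤ s)
    (hT : ∀ a : X, {y : Y | rel y a}.ncard ≤ T)
    (D : X → Option Y) (hD1 : D ∈ SIZE (k * (s - 1))) (hD2 : D ∉ CHN rel s)
    (x : Fin k → X) (hx : Function.Injective x) :
    {uu : Fin k → Y | dbUpdate D x (fun i => some (uu i)) ∈ CHN rel (s + 1)}.ncard
      ≤ k ^ 2 * s * T * Fintype.card Y ^ (k - 1) := by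
  classical
  obtain ⟨hDfin, hDcard⟩ := hD1
  set M := Fintype.card Y with hM
  -- the relevant finite set of targets
  set A' : Finset X := (Finset.univ.image x) ∪ hDfin.toFinset with hA'def
  have hA' : A'.card ≤ k * s := by
    have h1 : (Finset.univ.image x).card ≤ k := by
      calc (Finset.univ.image x).card ≤ (Finset.univ : Finset (Fin k)).card :=
            Finset.card_image_le
        _ = k := by simp
    have h2 : hDfin.toFinset.card ≤ k * (s - 1) := by
      rwa [Set.ncard_eq_toFinset_card _ hDfin] at hDcard
    obtain ⟨t, rfl⟩ : ∃ t, s = t + 1 := ⟨s - 1, by omega⟩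
    calc A'.card ≤ (Finset.univ.image x).card + hDfin.toFinset.card :=
          Finset.card_union_le _ _
      _ ≤ k + k * (t + 1 - 1) := Nat.add_le_add h1 h2
      _ = k * (t + 1) := by rw [Nat.add_sub_cancel]; ring
  -- extraction of a fresh link
  have hsub : {uu : Fin k → Y | dbUpdate D x (fun i => some (uu i)) ∈ CHN rel (s + 1)} ⊆
      {uu : Fin k → Y | ∃ j : Fin k, ∃ a ∈ A', rel (uu j) a} := by
    intro uu hu
    obtain ⟨xs, hxs⟩ := hu
    by_cases hall : ∀ i : Fin s, ∀ j : Fin k, x j ≠ xs i.castSucc.castSucc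
    · exfalso
      apply hD2
      refine ⟨fun i => xs i.castSucc, fun i => ?_⟩
      obtain ⟨y, hy1, hy2⟩ := hxs i.castSucc
      refine ⟨y, ?_, ?_⟩
      · rw [← hy1]
        exact (dbUpdate_apply_not_mem D x _ (hall i)).symm
      · exact hy2
    · push_neg at hall
      obtain ⟨i, j, hij⟩ := hall
      obtain ⟨y, hy1, hy2⟩ := hxs i.castSucc
      rw [← hij, dbUpdate_apply_mem D x hx _ j] at hy1
      have hyj : y = uu j := (Option.some.inj hy1).symm
      refine ⟨j, xs i.castSucc.succ, ?_, hyj ▸ hy2⟩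
      -- the target is either an update point or in the support of D
      obtain ⟨y', hy1', _⟩ := hxs i.succ
      have hy1'' : dbUpdate D x (fun i => some (uu i)) (xs i.castSucc.succ) = some y' := hy1'
      by_cases hmem : ∃ j', x j' = xs i.castSucc.succ
      · obtain ⟨j', hj'⟩ := hmem
        exact Finset.mem_union_left _ (Finset.mem_image.2 ⟨j', Finset.mem_univ _, hj'⟩)
      · push_neg at hmem
        rw [dbUpdate_apply_not_mem D x _ hmem] at hy1''
        refine Finset.mem_union_right _ ?_
        rw [Set.Finite.mem_toFinset]
        simp [hy1'']
  -- counting the bad set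
  have hfin : ∀ S : Set (Fin k → Y), S.Finite := fun S => S.toFinite
  have hle := Set.ncard_le_ncard hsub (hfin _)
  refine le_trans hle ?_
  have hbad : {uu : Fin k → Y | ∃ j : Fin k, ∃ a ∈ A', rel (uu j) a}.ncard
      ≤ k * (A'.card * (T * M ^ (k - 1))) := by
    rw [Set.ncard_eq_toFinset_card', Set.toFinset_setOf]
    have hsub2 : (Finset.univ.filter fun uu : Fin k → Y => ∃ j : Fin k, ∃ a ∈ A', rel (uu j) a)
        ⊆ Finset.univ.biUnion fun j : Fin k =>
            A'.biUnion fun a => Finset.univ.filter fun uu : Fin k → Y => rel (uu j) a := by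
      intro uu hu
      simp only [Finset.mem_filter, Finset.mem_univ, true_and] at hu
      obtain ⟨j, a, ha, hrel⟩ := hu
      simp only [Finset.mem_biUnion, Finset.mem_univ, true_and, Finset.mem_filter]
      exact ⟨j, a, ha, hrel⟩
    calc (Finset.univ.filter fun uu : Fin k → Y => ∃ j : Fin k, ∃ a ∈ A', rel (uu j) a).card
        ≤ (Finset.univ.biUnion fun j : Fin k =>
            A'.biUnion fun a => Finset.univ.filter fun uu : Fin k → Y => rel (uu j) a).card :=
          Finset.card_le_card hsub2
      _ ≤ ∑ j : Fin k, (A'.biUnion fun a =>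
            Finset.univ.filter fun uu : Fin k → Y => rel (uu j) a).card :=
          Finset.card_biUnion_le
      _ ≤ ∑ _j : Fin k, (A'.card * (T * M ^ (k - 1))) := by
          refine Finset.sum_le_sum fun j _ => ?_
          calc (A'.biUnion fun a =>
                Finset.univ.filter fun uu : Fin k → Y => rel (uu j) a).card
              ≤ ∑ a ∈ A', (Finset.univ.filter fun uu : Fin k → Y => rel (uu j) a).card :=
              Finset.card_biUnion_le
            _ ≤ ∑ _a ∈ A', T * M ^ (k - 1) := by
                refine Finset.sum_le_sum fun a _ => ?_
                rw [card_filter_comp hk j (fun y => rel y a)]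
                have : (Finset.univ.filter fun y => rel y a).card ≤ T := by
                  have := hT a
                  rwa [Set.ncard_eq_toFinset_card', Set.toFinset_setOf] at this
                exact Nat.mul_le_mul_right _ this
            _ = A'.card * (T * M ^ (k - 1)) := by rw [Finset.sum_const, smul_eq_mul]
      _ = k * (A'.card * (T * M ^ (k - 1))) := by rw [Finset.sum_const, smul_eq_mul]; simp
  refine le_trans hbad ?_
  calc k * (A'.card * (T * M ^ (k - 1))) ≤ k * ((k * s) * (T * M ^ (k - 1))) := by
        exact Nat.mul_le_mul_left _ (Nat.mul_le_mul_right _ hA')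
    _ = k ^ 2 * s * T * M ^ (k - 1) := by ring
end

section
/- Let Y be finite and nonempty with M := |Y|, let k ≥ 1 and s ≥ 1 be integers, let D be a database with D ∈ SIZE[k(s−1)] and D ∉ CL, and let x ∈ X^k have pairwise distinct entries. If U is uniformly distributed on Y^k, then the probability that D[x↦U] ∈ CL is at most (k(k−1) + k²(s−1))/M; equivalently, |{u ∈ Y^k : D[x↦u] ∈ CL}| ≤ (k(k−1) + k²(s−1))·M^{k−1}. -/
/- `CL`: the databases containing a collision, i.e. `D x = D x' ≠ ⊥` for some `x ≠ x'`. -/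
def CL {X Y : Type*} : Set (X → Option Y) :=
  {D | ∃ a b : X, a ≠ b ∧ D a = D b ∧ D a ≠ none}

lemma card_eval_eq {Y : Type*} [Fintype Y] {k : ℕ} (i : Fin k) (c : Y) :
    Nat.card {u : Fin k → Y // u i = c} = Fintype.card Y ^ (k - 1) := by
  classical
  have e : {u : Fin k → Y // u i = c} ≃ ({a : Fin k // a ≠ i} → Y) :=
    { toFun := fun u a => u.1 a
      invFun := fun g => ⟨fun a => if h : a = i then c else g ⟨a, h⟩, by simp⟩
      left_inv := fun u => by
        ext a
        by_cases h : a = i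
        · subst h; simp [u.2]
        · simp [h]
      right_inv := fun g => by ext a; simp [a.2] }
  rw [Nat.card_congr e, Nat.card_eq_fintype_card, Fintype.card_fun]
  simp

lemma card_eq_eval {Y : Type*} [Fintype Y] {k : ℕ} {i j : Fin k} (hij : i ≠ j) :
    Nat.card {u : Fin k → Y // u i = u j} = Fintype.card Y ^ (k - 1) := by
  classical
  have e : {u : Fin k → Y // u i = u j} ≃ ({a : Fin k // a ≠ j} → Y) :=
    { toFun := fun u a => u.1 a
      invFun := fun g => ⟨fun a => if h : a = j then g ⟨i, hij⟩ else g ⟨a, h⟩,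
        by simp [hij]⟩
      left_inv := fun u => by
        ext a
        by_cases h : a = j
        · subst h; simpa [hij] using u.2
        · simp [h]
      right_inv := fun g => by ext a; simp [a.2] }
  rw [Nat.card_congr e, Nat.card_eq_fintype_card, Fintype.card_fun]
  simp

theorem stmt_2 {X Y : Type*} [Fintype Y] [Nonempty Y]
    (k s : ℕ) (hk : 1 ≤ k) (hs : 1 ≤ s)
    (D : X → Option Y) (hD1 : D ∈ SIZE (k * (s - 1))) (hD2 : D ∉ CL)
    (x : Fin k → X) (hx : Function.Injective x) :
    {uu : Fin k → Y | dbUpdate D x (fun i => some (uu i)) ∈ CL}.ncard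
      ≤ (k * (k - 1) + k ^ 2 * (s - 1)) * Fintype.card Y ^ (k - 1) := by
  classical
  obtain ⟨hfin, hcard⟩ := hD1
  set M := Fintype.card Y with hM
  set T : Finset X := hfin.toFinset with hT
  have hTcard : T.card ≤ k * (s - 1) := by
    rwa [← Set.ncard_eq_toFinset_card _ hfin]
  -- basic facts about dbUpdate
  have upd_mem : ∀ (u : Fin k → Y) (i : Fin k),
      dbUpdate D x (fun i => some (u i)) (x i) = some (u i) := by
    intro u i
    unfold dbUpdate
    have h : ∃ i', x i' = x i := ⟨i, rfl⟩
    rw [dif_pos h]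
    have hc : h.choose = i := hx h.choose_spec
    simp [hc]
  have upd_not : ∀ (u : Fin k → Y) (a : X), (¬ ∃ i, x i = a) →
      dbUpdate D x (fun i => some (u i)) a = D a := by
    intro u a h
    unfold dbUpdate
    rw [dif_neg h]
  -- the covering finsets
  set F1 : Finset (Fin k → Y) :=
    (Finset.univ.offDiag).biUnion
      (fun p : Fin k × Fin k => Finset.univ.filter fun u => u p.1 = u p.2) with hF1
  set F2 : Finset (Fin k → Y) :=
    (Finset.univ ×ˢ T).biUnion
      (fun p : Fin k × X => Finset.univ.filter fun u => some (u p.1) = D p.2) with hF2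
  set B : Set (Fin k → Y) :=
    {uu : Fin k → Y | dbUpdate D x (fun i => some (uu i)) ∈ CL} with hB
  have hsub : B.toFinset ⊆ F1 ∪ F2 := by
    intro u hu
    rw [Set.mem_toFinset] at hu
    obtain ⟨a, b, hab, heq, hne⟩ := hu
    by_cases ha : ∃ i, x i = a
    · obtain ⟨i, hi⟩ := ha
      by_cases hb : ∃ j, x j = b
      · obtain ⟨j, hj⟩ := hb
        -- both updated: u i = u j, i ≠ j
        have hij : i ≠ j := by
          intro h; apply hab; rw [← hi, ← hj, h]
        have : u i = u j := by
          have h1 := upd_mem u i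
          have h2 := upd_mem u j
          rw [hi] at h1; rw [hj] at h2
          rw [h1, h2] at heq
          exact Option.some.inj heq
        apply Finset.mem_union_left
        rw [hF1]
        refine Finset.mem_biUnion.2 ⟨(i, j), ?_, ?_⟩
        · simp [Finset.mem_offDiag, hij]
        · simp [this]
      · -- a updated, b not
        have h1 := upd_mem u i
        rw [hi] at h1
        have h2 := upd_not u b hb
        have hDb : some (u i) = D b := by rw [← h1, ← h2]; exact heq
        have hbT : b ∈ T := by
          rw [hT, Set.Finite.mem_toFinset]
          intro hnone
          rw [hnone] at hDb
          simp at hDb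
        apply Finset.mem_union_right
        rw [hF2]
        refine Finset.mem_biUnion.2 ⟨(i, b), ?_, ?_⟩
        · simp [hbT]
        · simp [hDb]
    · by_cases hb : ∃ j, x j = b
      · obtain ⟨j, hj⟩ := hb
        have h1 := upd_mem u j
        rw [hj] at h1
        have h2 := upd_not u a ha
        have hDa : some (u j) = D a := by rw [← h1, ← h2]; exact heq.symm
        have haT : a ∈ T := by
          rw [hT, Set.Finite.mem_toFinset]
          intro hnone
          rw [hnone] at hDa
          simp at hDa
        apply Finset.mem_union_right
        rw [hF2]
        refine Finset.mem_biUnion.2 ⟨(j, a), ?_, ?_⟩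
        · simp [haT]
        · simp [hDa]
      · -- neither updated: D has a collision, contradiction
        exfalso
        apply hD2
        have h1 := upd_not u a ha
        have h2 := upd_not u b hb
        exact ⟨a, b, hab, by rw [← h1, ← h2]; exact heq, by rw [← h1]; exact hne⟩
  -- counting
  have hcount1 : ∀ {i j : Fin k}, i ≠ j →
      (Finset.univ.filter fun u : Fin k → Y => u i = u j).card = M ^ (k - 1) := by
    intro i j hij
    rw [← Fintype.card_subtype, ← Nat.card_eq_fintype_card]
    exact card_eq_eval hij
  have hcount2 : ∀ (i : Fin k) (a : X), a ∈ T →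
      (Finset.univ.filter fun u : Fin k → Y => some (u i) = D a).card ≤ M ^ (k - 1) := by
    intro i a haT
    rw [hT, Set.Finite.mem_toFinset] at haT
    obtain ⟨c, hc⟩ := Option.ne_none_iff_exists'.1 haT
    have : (Finset.univ.filter fun u : Fin k → Y => some (u i) = D a)
        = (Finset.univ.filter fun u : Fin k → Y => u i = c) := by
      apply Finset.filter_congr
      intro u _
      simp [hc]
    rw [this, ← Fintype.card_subtype, ← Nat.card_eq_fintype_card]
    rw [card_eval_eq i c]
  have hF1card : F1.card ≤ k * (k - 1) * M ^ (k - 1) := by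
    calc F1.card ≤ ∑ p ∈ Finset.univ.offDiag,
        (Finset.univ.filter fun u : Fin k → Y => u p.1 = u p.2).card :=
          Finset.card_biUnion_le
      _ = ∑ p ∈ (Finset.univ : Finset (Fin k)).offDiag, M ^ (k - 1) := by
          apply Finset.sum_congr rfl
          intro p hp
          rw [Finset.mem_offDiag] at hp
          exact hcount1 hp.2.2
      _ = (Finset.univ : Finset (Fin k)).offDiag.card * M ^ (k - 1) := by
          rw [Finset.sum_const, smul_eq_mul]
      _ = k * (k - 1) * M ^ (k - 1) := by
          rw [Finset.offDiag_card]
          simp [Nat.mul_sub_one, Nat.mul_sub]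
  have hF2card : F2.card ≤ k ^ 2 * (s - 1) * M ^ (k - 1) := by
    calc F2.card ≤ ∑ p ∈ Finset.univ ×ˢ T,
        (Finset.univ.filter fun u : Fin k → Y => some (u p.1) = D p.2).card :=
          Finset.card_biUnion_le
      _ ≤ ∑ _p ∈ (Finset.univ : Finset (Fin k)) ×ˢ T, M ^ (k - 1) := by
          apply Finset.sum_le_sum
          intro p hp
          rw [Finset.mem_product] at hp
          exact hcount2 p.1 p.2 hp.2
      _ = ((Finset.univ : Finset (Fin k)) ×ˢ T).card * M ^ (k - 1) := by
          rw [Finset.sum_const, smul_eq_mul]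
      _ ≤ k ^ 2 * (s - 1) * M ^ (k - 1) := by
          apply Nat.mul_le_mul_right
          rw [Finset.card_product, Finset.card_univ, Fintype.card_fin]
          calc k * T.card ≤ k * (k * (s - 1)) := Nat.mul_le_mul_left _ hTcard
            _ = k ^ 2 * (s - 1) := by ring
  calc B.ncard = B.toFinset.card := Set.ncard_eq_toFinset_card' B
    _ ≤ (F1 ∪ F2).card := Finset.card_le_card hsub
    _ ≤ F1.card + F2.card := Finset.card_union_le _ _
    _ ≤ k * (k - 1) * M ^ (k - 1) + k ^ 2 * (s - 1) * M ^ (k - 1) :=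
        Nat.add_le_add hF1card hF2card
    _ = (k * (k - 1) + k ^ 2 * (s - 1)) * M ^ (k - 1) := by ring
end

section
/- Let ℓ ≥ 1, let x = (x_1,…,x_ℓ) ∈ X^ℓ have pairwise distinct entries, and let y = (y_1,…,y_ℓ) ∈ Y^ℓ. Let P_H be the orthogonal projection of ℂ[HF] onto the span of the basis vectors e_H with H(x_i) = y_i for all i, and let P_D be the orthogonal projection of ℂ[DB] onto the span of the basis vectors e_D with D(x_i) = y_i for all i. Then for every Π ∈ ℂ[HF] with ‖Π‖ = 1: ‖P_H Π‖ ≤ ‖P_D (Comp Π)‖ + √(ℓ/M). -/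
noncomputable section

/-- the single-register entries `c(d, y)` of `Comp`:
`c(⊥, y) = 1/√M` and `c(u, y) = δ_{u,y} − 1/M` for `u, y ∈ Y`
(`Ȳ = Y ∪ {⊥}` is modeled by `Option Y`, with `⊥ = none`) -/
def compEntry (Y : Type*) [Fintype Y] [DecidableEq Y] : Option Y → Y → ℂ
  | none, _ => ((Real.sqrt (Fintype.card Y) : ℝ) : ℂ)⁻¹
  | some u, y => (if u = y then (1 : ℂ) else 0) - (Fintype.card Y : ℂ)⁻¹

/-!
Let `S` be the set of the points `x i` and `ψ := P_H Π`, so that `⟪ψ, Π⟫ = ‖ψ‖²`. Let `E` act on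
each register as `Comp` outside `S` and as the embedding `Y ↪ Ȳ` on `S`. Then `E` is an isometry
and `E ψ` lies in the range of `P_D`, so `|⟪E ψ, Comp Π⟫| ≤ ‖ψ‖ ‖P_D (Comp Π)‖`. Register by
register, `Comp† E` is the identity outside `S` and the centering projection `1 - J/M` on `S`, so
`⟪E ψ, Comp Π⟫ = ⟪G ψ, Π⟫` for an orthogonal projection `G`. Every `H` in the support of `ψ` takes
the values `y` on `S`, whence `⟪ψ, G ψ⟫ = (1 - 1/M)^|S| ‖ψ‖²` and, by Bernoulli's inequality,
`‖G ψ - ψ‖² = (1 - (1 - 1/M)^|S|) ‖ψ‖² ≤ (ℓ/M) ‖ψ‖²`. Altogether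
`‖ψ‖² = |⟪ψ, Π⟫| ≤ |⟪G ψ, Π⟫| + ‖G ψ - ψ‖ ≤ ‖ψ‖ (‖P_D (Comp Π)‖ + √(ℓ/M))`.
-/

open Matrix WithLp

section PiKronecker

variable {X α β γ R : Type*} [Fintype X]

def piKronecker [CommMonoid R] (c : X → Matrix β α R) : Matrix (X → β) (X → α) R :=
  Matrix.of fun D H => ∏ a, c a (D a) (H a)

@[simp]
theorem piKronecker_apply [CommMonoid R] (c : X → Matrix β α R) (D : X → β) (H : X → α) :
    piKronecker c D H = ∏ a, c a (D a) (H a) :=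
  rfl

theorem piKronecker_mul [CommSemiring R] [DecidableEq X] [Fintype β]
    (c : X → Matrix γ β R) (c' : X → Matrix β α R) :
    piKronecker c * piKronecker c' = piKronecker fun a => c a * c' a := by
  ext D H
  simp only [mul_apply, piKronecker_apply, ← Finset.prod_mul_distrib, Fintype.prod_sum]

theorem piKronecker_one [CommSemiring R] [DecidableEq α] :
    piKronecker (fun _ : X => (1 : Matrix α α R)) = 1 := by
  ext D H
  simp [one_apply, Finset.prod_boole, funext_iff]

theorem conjTranspose_piKronecker [CommSemiring R] [StarRing R] (c : X → Matrix β α R) :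
    (piKronecker c)ᴴ = piKronecker fun a => (c a)ᴴ := by
  ext H D
  simp [conjTranspose_apply, star_prod]

theorem piKronecker_apply_self [CommMonoidWithZero R] [DecidableEq α] (g : X → Matrix α α R)
    (S : Finset X) (w : R) (hg : ∀ a ∉ S, g a = 1) (hdiag : ∀ a ∈ S, ∀ u, g a u u = w)
    (H : X → α) : piKronecker g H H = w ^ S.card := by
  rw [piKronecker_apply, ← Finset.prod_const, ← Finset.prod_subset (Finset.subset_univ S)]
  · exact Finset.prod_congr rfl fun a ha => hdiag a ha (H a)
  · intro a _ ha
    simp [hg a ha]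

theorem piKronecker_apply_eq_zero [CommMonoidWithZero R] [DecidableEq α] (g : X → Matrix α α R)
    (S : Finset X) (hg : ∀ a ∉ S, g a = 1) {H H' : X → α} (hne : H ≠ H')
    (hS : ∀ a ∈ S, H a = H' a) : piKronecker g H H' = 0 := by
  obtain ⟨a, ha⟩ := Function.ne_iff.1 hne
  have haS : a ∉ S := fun h => ha (hS a h)
  exact Finset.prod_eq_zero (Finset.mem_univ a) (by simp [hg a haS, ha])

end PiKronecker

section EuclideanMatrix

variable {𝕜 ι κ : Type*} [RCLike 𝕜] [Fintype ι]

theorem inner_congr_right_of_eqOn_support {u v w : EuclideanSpace 𝕜 ι}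
    (h : ∀ i, u i ≠ 0 → v i = w i) : inner 𝕜 u v = inner 𝕜 u w := by
  simp only [PiLp.inner_apply]
  refine Finset.sum_congr rfl fun i _ => ?_
  by_cases hi : u i = 0
  · simp [hi]
  · rw [h i hi]

variable [DecidableEq ι]

theorem toEuclideanLin_eq_of_apply_single (f : EuclideanSpace 𝕜 ι →ₗ[𝕜] EuclideanSpace 𝕜 κ)
    (A : Matrix κ ι 𝕜) (hf : ∀ i j, f (EuclideanSpace.single j 1) i = A i j) :
    f = A.toEuclideanLin := by
  refine (EuclideanSpace.basisFun ι 𝕜).toBasis.ext fun j => ?_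
  ext i
  simp [hf, toLpLin_apply]

theorem apply_eq_ite_of_apply_single (P : EuclideanSpace 𝕜 ι →ₗ[𝕜] EuclideanSpace 𝕜 ι)
    (p : ι → Prop) [DecidablePred p]
    (hP : ∀ i, P (EuclideanSpace.single i 1) = if p i then EuclideanSpace.single i 1 else 0)
    (v : EuclideanSpace 𝕜 ι) (i : ι) : P v i = if p i then v i else 0 := by
  rw [toEuclideanLin_eq_of_apply_single P (diagonal fun i => if p i then 1 else 0)]
  · simp [toLpLin_apply, mulVec_diagonal]
  · intro i j
    rw [hP, diagonal_apply]
    by_cases hj : p j <;> by_cases hij : i = j <;> simp [hj, hij]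

variable [Fintype κ] [DecidableEq κ]

theorem inner_toEuclideanLin_right (A : Matrix κ ι 𝕜) (u : EuclideanSpace 𝕜 κ)
    (v : EuclideanSpace 𝕜 ι) :
    inner 𝕜 u (A.toEuclideanLin v) = inner 𝕜 (Aᴴ.toEuclideanLin u) v := by
  rw [toEuclideanLin_conjTranspose_eq_adjoint, LinearMap.adjoint_inner_left]

theorem norm_toEuclideanLin_of_conjTranspose_mul_self (A : Matrix κ ι 𝕜) (hA : Aᴴ * A = 1)
    (v : EuclideanSpace 𝕜 ι) : ‖A.toEuclideanLin v‖ = ‖v‖ := by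
  rw [@norm_eq_sqrt_re_inner 𝕜, @norm_eq_sqrt_re_inner 𝕜 _ _ _ _ v, inner_toEuclideanLin_right,
    ← LinearMap.comp_apply, ← toLpLin_mul_same, hA, toLpLin_one, LinearMap.id_apply]

theorem norm_toEuclideanLin_sub_self_sq (G : Matrix ι ι 𝕜) (hG : Gᴴ * G = G)
    (v : EuclideanSpace 𝕜 ι) :
    ‖G.toEuclideanLin v - v‖ ^ 2 = ‖v‖ ^ 2 - RCLike.re (inner 𝕜 v (G.toEuclideanLin v)) := by
  have h : ‖G.toEuclideanLin v‖ ^ 2 = RCLike.re (inner 𝕜 v (G.toEuclideanLin v)) := by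
    rw [← @inner_self_eq_norm_sq 𝕜, inner_toEuclideanLin_right, ← LinearMap.comp_apply,
      ← toLpLin_mul_same, hG, inner_re_symm]
  rw [@norm_sub_sq 𝕜, h, inner_re_symm]
  ring

theorem exists_ne_zero_of_toEuclideanLin_piKronecker_ne_zero {X α β : Type*} [Fintype X]
    [DecidableEq X] [Fintype α] [DecidableEq α] (c : X → Matrix β α 𝕜)
    (ψ : EuclideanSpace 𝕜 (X → α)) {D : X → β} (h : (piKronecker c).toEuclideanLin ψ D ≠ 0) :
    ∃ H, ψ H ≠ 0 ∧ ∀ a, c a (D a) (H a) ≠ 0 := by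
  obtain ⟨H, -, hH⟩ := Finset.exists_ne_zero_of_sum_ne_zero h
  exact ⟨H, right_ne_zero_of_mul hH,
    fun a => Finset.prod_ne_zero_iff.1 (left_ne_zero_of_mul hH) a (Finset.mem_univ a)⟩

theorem inner_toEuclideanLin_piKronecker_self {X α : Type*} [Fintype X] [DecidableEq X]
    [Fintype α] [DecidableEq α] (g : X → Matrix α α 𝕜) (S : Finset X) (w : 𝕜)
    (hg : ∀ a ∉ S, g a = 1) (hdiag : ∀ a ∈ S, ∀ u, g a u u = w) (ψ : EuclideanSpace 𝕜 (X → α))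
    (hψ : ∀ H H', ψ H ≠ 0 → ψ H' ≠ 0 → ∀ a ∈ S, H a = H' a) :
    inner 𝕜 ψ ((piKronecker g).toEuclideanLin ψ) = w ^ S.card * inner 𝕜 ψ ψ := by
  simp only [PiLp.inner_apply, Finset.mul_sum]
  refine Finset.sum_congr rfl fun H _ => ?_
  by_cases hH : ψ H = 0
  · simp [hH]
  have hGψ : (piKronecker g).toEuclideanLin ψ H = w ^ S.card * ψ H := by
    rw [toLpLin_apply, PiLp.toLp_apply, mulVec, dotProduct, Finset.sum_eq_single H]
    · rw [piKronecker_apply_self g S w hg hdiag]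
    · intro H' _ hne
      by_cases hH' : ψ H' = 0
      · simp [hH']
      · rw [piKronecker_apply_eq_zero g S hg hne.symm (hψ H H' hH hH'), zero_mul]
    · simp
  simp only [RCLike.inner_apply, hGψ]
  ring

end EuclideanMatrix

theorem norm_le_norm_add_of_inner_eq {𝕜 E F : Type*} [RCLike 𝕜] [NormedAddCommGroup E]
    [InnerProductSpace 𝕜 E] [NormedAddCommGroup F] [InnerProductSpace 𝕜 F]
    {ψ v ξ : E} {φ w : F} {ε : ℝ} (hε : 0 ≤ ε) (hv : ‖v‖ ≤ 1)
    (hψv : inner 𝕜 ψ v = (‖ψ‖ ^ 2 : 𝕜)) (hφ : ‖φ‖ ≤ ‖ψ‖) (hξ : ‖ξ - ψ‖ ≤ ε * ‖ψ‖)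
    (hφw : inner 𝕜 φ w = inner 𝕜 ξ v) :
    ‖ψ‖ ≤ ‖w‖ + ε := by
  have key : ‖ψ‖ * ‖ψ‖ ≤ ‖ψ‖ * (‖w‖ + ε) :=
    calc ‖ψ‖ * ‖ψ‖ = ‖inner 𝕜 ψ v‖ := by
          rw [hψv]; norm_cast; rw [abs_of_nonneg (by positivity), sq]
      _ = ‖inner 𝕜 φ w - inner 𝕜 (ξ - ψ) v‖ := by rw [hφw, inner_sub_left, sub_sub_cancel]
      _ ≤ ‖φ‖ * ‖w‖ + ‖ξ - ψ‖ * ‖v‖ :=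
        (norm_sub_le _ _).trans (add_le_add (norm_inner_le_norm _ _) (norm_inner_le_norm _ _))
      _ ≤ ‖ψ‖ * ‖w‖ + ε * ‖ψ‖ * 1 := by gcongr
      _ = ‖ψ‖ * (‖w‖ + ε) := by ring
  rcases (norm_nonneg ψ).eq_or_lt with h | h
  · rw [← h]; positivity
  · exact le_of_mul_le_mul_left key h

section Register

variable (Y : Type*) [Fintype Y] [DecidableEq Y]

def compMatrix : Matrix (Option Y) Y ℂ := Matrix.of (compEntry Y)

def someMatrix : Matrix (Option Y) Y ℂ := Matrix.of fun d u => if d = some u then 1 else 0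

def centeringMatrix : Matrix Y Y ℂ :=
  Matrix.of fun u v => (if u = v then 1 else 0) - (Fintype.card Y : ℂ)⁻¹

variable {Y}

theorem conjTranspose_centeringMatrix_mul_self :
    (centeringMatrix Y)ᴴ * centeringMatrix Y = centeringMatrix Y := by
  ext u v
  have hM : (Fintype.card Y : ℂ) ≠ 0 := Nat.cast_ne_zero.2 (Fintype.card_pos_iff.2 ⟨u⟩).ne'
  simp only [mul_apply, conjTranspose_apply, centeringMatrix, of_apply, sub_mul, mul_sub,
    Finset.sum_sub_distrib, star_sub, star_inv₀, star_natCast, apply_ite star, star_one, star_zero,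
    ite_mul, mul_ite, one_mul, mul_one, zero_mul, mul_zero, Finset.sum_ite_eq',
    Finset.mem_univ, if_true, Finset.sum_const, Finset.card_univ, nsmul_eq_mul]
  by_cases h : u = v
  · simp [h]; field_simp; ring
  · simp [h, Ne.symm h]; field_simp; ring

theorem conjTranspose_compMatrix_mul_self : (compMatrix Y)ᴴ * compMatrix Y = 1 := by
  ext u v
  have hW := congr_fun₂ (conjTranspose_centeringMatrix_mul_self (Y := Y)) u v
  -- the row `⊥` of `Comp` contributes `1/M`, the rows in `Y` form the centering matrix
  have hnone : star (compMatrix Y none u) * compMatrix Y none v = (Fintype.card Y : ℂ)⁻¹ := by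
    simp only [compMatrix, of_apply, compEntry, star_inv₀, Complex.star_def, Complex.conj_ofReal,
      ← mul_inv, ← Complex.ofReal_mul, Real.mul_self_sqrt (Nat.cast_nonneg _),
      Complex.ofReal_natCast]
  rw [mul_apply] at hW ⊢
  rw [Fintype.sum_option]
  simp only [conjTranspose_apply] at hW ⊢
  rw [hnone]
  change _ + ∑ m, star (centeringMatrix Y m u) * centeringMatrix Y m v = _
  rw [hW]
  rcases eq_or_ne u v with rfl | h <;> simp [centeringMatrix, one_apply, *]

theorem conjTranspose_someMatrix_mul_self : (someMatrix Y)ᴴ * someMatrix Y = 1 := by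
  ext u v
  rcases eq_or_ne u v with rfl | h
  · simp [mul_apply, someMatrix]
  · simp [mul_apply, someMatrix, h, Ne.symm h]

theorem conjTranspose_compMatrix_mul_someMatrix :
    (compMatrix Y)ᴴ * someMatrix Y = centeringMatrix Y := by
  ext u v
  rcases eq_or_ne u v with rfl | h
  · simp [mul_apply, someMatrix, compMatrix, centeringMatrix, compEntry]
  · simp [mul_apply, someMatrix, compMatrix, centeringMatrix, compEntry, h, Ne.symm h]

end Register

section Registers

variable {X Y : Type*} [Fintype X] [DecidableEq X] [Fintype Y] [DecidableEq Y]

variable (Y) in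
def compExcept (S : Finset X) : Matrix (X → Option Y) (X → Y) ℂ :=
  piKronecker fun a => if a ∈ S then someMatrix Y else compMatrix Y

variable (Y) in
def centeringOn (S : Finset X) : Matrix (X → Y) (X → Y) ℂ :=
  piKronecker fun a => if a ∈ S then centeringMatrix Y else 1

theorem conjTranspose_compExcept_mul_self (S : Finset X) :
    (compExcept Y S)ᴴ * compExcept Y S = 1 := by
  rw [compExcept, conjTranspose_piKronecker, piKronecker_mul, ← piKronecker_one]
  congr 1
  ext1 a
  split_ifs
  · exact conjTranspose_someMatrix_mul_self
  · exact conjTranspose_compMatrix_mul_self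

theorem conjTranspose_comp_mul_compExcept (S : Finset X) :
    (piKronecker fun _ : X => compMatrix Y)ᴴ * compExcept Y S = centeringOn Y S := by
  rw [compExcept, conjTranspose_piKronecker, piKronecker_mul, centeringOn]
  congr 1
  ext1 a
  split_ifs
  · exact conjTranspose_compMatrix_mul_someMatrix
  · exact conjTranspose_compMatrix_mul_self

theorem conjTranspose_centeringOn_mul_self (S : Finset X) :
    (centeringOn Y S)ᴴ * centeringOn Y S = centeringOn Y S := by
  rw [centeringOn, conjTranspose_piKronecker, piKronecker_mul]
  congr 1
  ext1 a
  split_ifs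
  · exact conjTranspose_centeringMatrix_mul_self
  · simp

theorem norm_centeringOn_sub_le (S : Finset X) (ψ : EuclideanSpace ℂ (X → Y))
    (hψ : ∀ H H', ψ H ≠ 0 → ψ H' ≠ 0 → ∀ a ∈ S, H a = H' a) :
    ‖(centeringOn Y S).toEuclideanLin ψ - ψ‖ ≤ √(S.card / Fintype.card Y) * ‖ψ‖ := by
  set t : ℝ := (Fintype.card Y : ℝ)⁻¹
  have hq := inner_toEuclideanLin_piKronecker_self
    (fun a => if a ∈ S then centeringMatrix Y else 1) S (1 - (t : ℂ)) (fun a ha => if_neg ha)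
    (fun a ha u => by simp [ha, centeringMatrix, t]) ψ hψ
  have hsq : ‖(centeringOn Y S).toEuclideanLin ψ - ψ‖ ^ 2 = (1 - (1 - t) ^ S.card) * ‖ψ‖ ^ 2 := by
    have hq' : inner ℂ ψ ((centeringOn Y S).toEuclideanLin ψ) =
        (((1 - t) ^ S.card * ‖ψ‖ ^ 2 : ℝ) : ℂ) := by
      rw [centeringOn, hq, inner_self_eq_norm_sq_to_K]
      push_cast
      rfl
    rw [norm_toEuclideanLin_sub_self_sq _ (conjTranspose_centeringOn_mul_self S), hq',
      RCLike.re_to_complex, Complex.ofReal_re]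
    ring
  have hber : 1 - (1 - t) ^ S.card ≤ S.card * t := by
    have ht : t ≤ 1 := Nat.cast_inv_le_one _
    have := one_add_mul_le_pow (a := -t) (by linarith) S.card
    rw [← sub_eq_add_neg, mul_neg, ← sub_eq_add_neg] at this
    linarith
  calc ‖(centeringOn Y S).toEuclideanLin ψ - ψ‖ = √((1 - (1 - t) ^ S.card) * ‖ψ‖ ^ 2) := by
        rw [← hsq, Real.sqrt_sq (norm_nonneg _)]
    _ ≤ √(S.card * t * ‖ψ‖ ^ 2) := by gcongr
    _ = √(S.card / Fintype.card Y) * ‖ψ‖ := by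
        rw [Real.sqrt_mul' _ (sq_nonneg _), Real.sqrt_sq (norm_nonneg _), div_eq_mul_inv]

theorem exists_of_compExcept_apply_ne_zero (S : Finset X) (ψ : EuclideanSpace ℂ (X → Y))
    {D : X → Option Y} (h : (compExcept Y S).toEuclideanLin ψ D ≠ 0) :
    ∃ H, ψ H ≠ 0 ∧ ∀ a ∈ S, D a = some (H a) := by
  obtain ⟨H, hH, hDH⟩ := exists_ne_zero_of_toEuclideanLin_piKronecker_ne_zero _ ψ h
  refine ⟨H, hH, fun a ha => ?_⟩
  simpa [ha, someMatrix] using hDH a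

end Registers

open Classical in
theorem stmt_3_general {X Y : Type*} [Fintype X]
    [Fintype Y] [DecidableEq Y]
    (ℓ : ℕ)
    -- pairwise distinct `x_1, …, x_ℓ` and `y_1, …, y_ℓ`
    (x : Fin ℓ → X) (y : Fin ℓ → Y)
    -- the isometry `Comp : ℂ[HF] → ℂ[DB]`, given by its matrix entries
    (Comp : EuclideanSpace ℂ (X → Y) →L[ℂ] EuclideanSpace ℂ (X → Option Y))
    (hComp : ∀ (H : X → Y) (D : X → Option Y),
      inner (𝕜 := ℂ) (EuclideanSpace.single D 1) (Comp (EuclideanSpace.single H 1)) =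
        ∏ a : X, compEntry Y (D a) (H a))
    -- `P_H`: the projection onto the span of the `e_H` with `H (x i) = y i` for all `i`
    (PH : EuclideanSpace ℂ (X → Y) →L[ℂ] EuclideanSpace ℂ (X → Y))
    (hPH : ∀ H : X → Y, PH (EuclideanSpace.single H 1) =
      if ∀ i, H (x i) = y i then EuclideanSpace.single H 1 else 0)
    -- `P_D`: the projection onto the span of the `e_D` with `D (x i) = y i` for all `i`
    (PD : EuclideanSpace ℂ (X → Option Y) →L[ℂ] EuclideanSpace ℂ (X → Option Y))
    (hPD : ∀ D : X → Option Y, PD (EuclideanSpace.single D 1) =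
      if ∀ i, D (x i) = some (y i) then EuclideanSpace.single D 1 else 0)
    (Pi : EuclideanSpace ℂ (X → Y)) (hPi : ‖Pi‖ = 1) :
    ‖PH Pi‖ ≤ ‖PD (Comp Pi)‖ + Real.sqrt (ℓ / Fintype.card Y) := by
  set S := Finset.univ.image x
  set ψ := PH Pi
  have hPHv : ∀ v H, PH v H = if ∀ i, H (x i) = y i then v H else 0 :=
    apply_eq_ite_of_apply_single PH.toLinearMap _ hPH
  have hPDv : ∀ v D, PD v D = if ∀ i, D (x i) = some (y i) then v D else 0 :=
    apply_eq_ite_of_apply_single PD.toLinearMap _ hPD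
  have hCompv : Comp Pi = (piKronecker fun _ : X => compMatrix Y).toEuclideanLin Pi := by
    rw [← ContinuousLinearMap.coe_coe, toEuclideanLin_eq_of_apply_single Comp.toLinearMap
      (piKronecker fun _ => compMatrix Y)
      fun D H => by simpa [EuclideanSpace.inner_single_left, compMatrix] using hComp H D]
  have hψ : ∀ H, ψ H ≠ 0 → ∀ i, H (x i) = y i := fun H h => by
    by_contra hH
    exact h (by simpa [hH] using hPHv Pi H)
  have hφ : ∀ D, (compExcept Y S).toEuclideanLin ψ D ≠ 0 → ∀ i, D (x i) = some (y i) := by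
    intro D h i
    obtain ⟨H, hH, hDH⟩ := exists_of_compExcept_apply_ne_zero S ψ h
    rw [hDH _ (Finset.mem_image_of_mem x (Finset.mem_univ i)), hψ H hH i]
  refine norm_le_norm_add_of_inner_eq (𝕜 := ℂ) (ξ := (centeringOn Y S).toEuclideanLin ψ)
    (by positivity) hPi.le ?_
    (norm_toEuclideanLin_of_conjTranspose_mul_self _ (conjTranspose_compExcept_mul_self S) ψ).le
    ?_ ?_
  · rw [← inner_self_eq_norm_sq_to_K]
    exact inner_congr_right_of_eqOn_support fun H h => by rw [hPHv, if_pos (hψ H h)]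
  · refine (norm_centeringOn_sub_le S ψ fun H H' h h' a ha => ?_).trans ?_
    · obtain ⟨i, -, rfl⟩ := Finset.mem_image.1 ha
      rw [hψ H h i, hψ H' h' i]
    · gcongr
      exact Finset.card_image_le.trans (by simp)
  · rw [inner_congr_right_of_eqOn_support (w := Comp Pi)
        fun D h => by rw [hPDv, if_pos (hφ D h)],
      hCompv, inner_toEuclideanLin_right, ← LinearMap.comp_apply, ← toLpLin_mul_same,
      conjTranspose_comp_mul_compExcept]

open Classical in
theorem stmt_3 {X Y : Type*} [Fintype X] [Nonempty X]
    [Fintype Y] [DecidableEq Y] [AddCommGroup Y]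
    (ℓ : ℕ) (hℓ : 1 ≤ ℓ)
    -- pairwise distinct `x_1, …, x_ℓ` and `y_1, …, y_ℓ`
    (x : Fin ℓ → X) (hx : Function.Injective x) (y : Fin ℓ → Y)
    -- the isometry `Comp : ℂ[HF] → ℂ[DB]`, given by its matrix entries
    (Comp : EuclideanSpace ℂ (X → Y) →L[ℂ] EuclideanSpace ℂ (X → Option Y))
    (hComp : ∀ (H : X → Y) (D : X → Option Y),
      inner (𝕜 := ℂ) (EuclideanSpace.single D 1) (Comp (EuclideanSpace.single H 1)) =
        ∏ a : X, compEntry Y (D a) (H a))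
    -- `P_H`: the projection onto the span of the `e_H` with `H (x i) = y i` for all `i`
    (PH : EuclideanSpace ℂ (X → Y) →L[ℂ] EuclideanSpace ℂ (X → Y))
    (hPH : ∀ H : X → Y, PH (EuclideanSpace.single H 1) =
      if ∀ i, H (x i) = y i then EuclideanSpace.single H 1 else 0)
    -- `P_D`: the projection onto the span of the `e_D` with `D (x i) = y i` for all `i`
    (PD : EuclideanSpace ℂ (X → Option Y) →L[ℂ] EuclideanSpace ℂ (X → Option Y))
    (hPD : ∀ D : X → Option Y, PD (EuclideanSpace.single D 1) =
      if ∀ i, D (x i) = some (y i) then EuclideanSpace.single D 1 else 0)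
    (Pi : EuclideanSpace ℂ (X → Y)) (hPi : ‖Pi‖ = 1) :
    ‖PH Pi‖ ≤ ‖PD (Comp Pi)‖ + Real.sqrt (ℓ / Fintype.card Y) :=
  stmt_3_general ℓ x y Comp hComp PH hPH PD hPD Pi hPi

end
end

section
/- For every nontrivial character ŷ of Y and every subset L ⊆ Y: Σ_{r ∈ Ȳ} Σ_{u ∈ L, u ≠ r} |γ^ŷ_{u,r}|² ≤ 10·|L|/M, where the inner sum is over u ∈ L with u ≠ r. -/
noncomputable section

/-- the computational-basis matrix entries `γ^ŷ_{u,r}` of the single-register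
compressed-oracle unitary, for a nontrivial character `ŷ` of `Y`
(`Ȳ = Y ∪ {⊥}` is modeled by `Option Y`, with `⊥ = none`) -/
def gammaEnt {Y : Type*} [Fintype Y] [DecidableEq Y] [AddCommGroup Y]
    (c : AddChar Y ℂ) : Option Y → Option Y → ℂ
  | none, none => 0
  | none, some r => c r / ((Real.sqrt (Fintype.card Y) : ℝ) : ℂ)
  | some u, none => c u / ((Real.sqrt (Fintype.card Y) : ℝ) : ℂ)
  | some u, some r =>
      if u = r then (1 - 2 / (Fintype.card Y : ℂ)) * c u + 1 / (Fintype.card Y : ℂ)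
      else (1 - c r - c u) / (Fintype.card Y : ℂ)

theorem stmt_6 {Y : Type*} [Fintype Y] [DecidableEq Y] [AddCommGroup Y]
    (c : AddChar Y ℂ) (hc : c ≠ 1) (L : Finset Y) :
    ∑ r : Option Y, ∑ u ∈ L,
        (if some u = r then (0 : ℝ) else ‖gammaEnt c (some u) r‖ ^ 2)
      ≤ 10 * L.card / Fintype.card Y := by
  have hM : (0:ℝ) < Fintype.card Y := by positivity
  set M : ℝ := (Fintype.card Y : ℝ) with hMdef
  rw [Fintype.sum_option]
  have h1 : ∑ u ∈ L, (if some u = none then (0:ℝ) else ‖gammaEnt c (some u) none‖ ^ 2)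
      = L.card * (1 / M) := by
    rw [Finset.sum_congr rfl (fun u _ => ?_), Finset.sum_const, nsmul_eq_mul]
    simp only [reduceCtorEq, if_false, gammaEnt]
    rw [norm_div, AddChar.norm_apply, Complex.norm_real, Real.norm_eq_abs,
      abs_of_nonneg (Real.sqrt_nonneg _)]
    rw [div_pow, one_pow, Real.sq_sqrt (le_of_lt hM)]
  have h2 : ∀ r : Y, ∑ u ∈ L, (if some u = some r then (0:ℝ) else ‖gammaEnt c (some u) (some r)‖ ^ 2)
      ≤ L.card * (9 / M^2) := by
    intro r
    calc ∑ u ∈ L, (if some u = some r then (0:ℝ) else ‖gammaEnt c (some u) (some r)‖ ^ 2)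
        ≤ ∑ u ∈ L, (9 / M^2) := by
          apply Finset.sum_le_sum
          intro u _
          split
          · positivity
          · rename_i h
            have hur : u ≠ r := fun h' => h (by rw [h'])
            simp only [gammaEnt, if_neg hur]
            rw [norm_div]
            have hnum : ‖1 - c r - c u‖ ≤ 3 := by
              calc ‖1 - c r - c u‖ ≤ ‖1 - c r‖ + ‖c u‖ := norm_sub_le _ _
                _ ≤ ‖(1:ℂ)‖ + ‖c r‖ + ‖c u‖ := by
                    gcongr; exact norm_sub_le _ _
                _ = 3 := by simp; norm_num
            have hden : ‖(Fintype.card Y : ℂ)‖ = M := by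
              simp [M]
            rw [hden, div_pow]
            have h9 : ‖1 - c r - c u‖^2 ≤ 9 := by nlinarith [norm_nonneg (1 - c r - c u)]
            exact div_le_div_of_nonneg_right h9 (by positivity) |>.trans_eq rfl
      _ = L.card * (9 / M^2) := by rw [Finset.sum_const, nsmul_eq_mul]
  calc _ ≤ L.card * (1 / M) + ∑ r : Y, L.card * (9 / M^2) := by
        rw [h1]; gcongr with r _; exact h2 r
    _ = L.card * (1 / M) + M * (L.card * (9 / M^2)) := by
        rw [Finset.sum_const, nsmul_eq_mul]; simp [M]
    _ = 10 * L.card / M := by field_simp; ring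
end
end

section
/- For every integer k ≥ 1, the quantum transition capacity of turning a database with no 0-preimage into one with a 0-preimage by one k-parallel query satisfies ⟦¬PRMG → PRMG⟧_k ≤ √(10·k/M). -/
noncomputable section

/- `Ȳ = Y ∪ {⊥}` is modeled by `Option Y` (`⊥ = none`), databases by `X → Option Y`,
and `ℂ[DB]` by `EuclideanSpace ℂ (X → Option Y)`. -/

/-- matrix (in the computational basis) of the single-register unitary `Comp` -/
def compMat (Y : Type*) [Fintype Y] [DecidableEq Y] :
    Matrix (Option Y) (Option Y) ℂ :=
  Matrix.of fun u v =>
    match u, v with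
    | none, none => 0
    | some _, none => ((Real.sqrt (Fintype.card Y) : ℝ) : ℂ)⁻¹
    | none, some _ => ((Real.sqrt (Fintype.card Y) : ℝ) : ℂ)⁻¹
    | some a, some b => (if a = b then (1 : ℂ) else 0) - ((Fintype.card Y : ℕ) : ℂ)⁻¹

/-- matrix of the diagonal unitary `O_ŷ` associated to a character `ŷ` of `Y` -/
def oMat {Y : Type*} [Fintype Y] [DecidableEq Y] [AddCommGroup Y] (c : AddChar Y ℂ) :
    Matrix (Option Y) (Option Y) ℂ :=
  Matrix.diagonal fun u => Option.elim u 1 fun r => c r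

/-- matrix of the single-register compressed oracle `cO_ŷ = Comp ∘ O_ŷ ∘ Comp` -/
def cOMat {Y : Type*} [Fintype Y] [DecidableEq Y] [AddCommGroup Y] (c : AddChar Y ℂ) :
    Matrix (Option Y) (Option Y) ℂ :=
  compMat Y * oMat c * compMat Y

/-- a single-register operator (given by its matrix `m`) acting at register `x0` -/
def liftMat {X Y : Type*} [Fintype X] [DecidableEq X] [DecidableEq Y] (x0 : X)
    (m : Matrix (Option Y) (Option Y) ℂ) :
    Matrix (X → Option Y) (X → Option Y) ℂ :=
  Matrix.of fun D' D => if ∀ a, a ≠ x0 → D' a = D a then m (D' x0) (D x0) else 0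

/-- matrix of `cO_{x,ŷ}`: the composition of `cO_{ŷ i}` acting at register `x i` -/
def cOparMat {X Y : Type*} [Fintype X] [DecidableEq X] [Fintype Y] [DecidableEq Y]
    [AddCommGroup Y] {k : ℕ} (x : Fin k → X) (c : Fin k → AddChar Y ℂ) :
    Matrix (X → Option Y) (X → Option Y) ℂ :=
  (List.ofFn fun i : Fin k => liftMat (x i) (cOMat (c i))).prod

/-- matrix of the orthogonal projection onto `span{e_D : D ∈ P}` -/
def projMat {ι : Type*} [DecidableEq ι] (P : Set ι) : Matrix ι ι ℂ := by
  classical exact Matrix.of fun i j => if i = j ∧ i ∈ P then 1 else 0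

/-- the (continuous linear) operator on `ℓ²` given by a matrix -/
def toOp {ι : Type*} [Fintype ι] [DecidableEq ι] (m : Matrix ι ι ℂ) :
    EuclideanSpace ℂ ι →L[ℂ] EuclideanSpace ℂ ι :=
  LinearMap.toContinuousLinearMap (Matrix.toEuclideanLin m)

/-- `D|^x`: the set of databases that coincide with `D` outside of `x` -/
def agreeOff {X Y : Type*} {k : ℕ} (D : X → Option Y) (x : Fin k → X) :
    Set (X → Option Y) :=
  {D' | ∀ a : X, (∀ i, x i ≠ a) → D' a = D a}

/-- The quantum transition capacity `⟦P → P' | X₀⟧_k`: the supremum, over all `x ∈ X₀^k`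
with pairwise distinct entries, all `k`-tuples `ŷ` of characters of `Y` and all databases `D`,
of `‖P'|_{D|^x} ∘ cO_{x,ŷ} ∘ P|_{D|^x}‖` (`0` if the range is empty). -/
def qtc {X Y : Type*} [Fintype X] [DecidableEq X] [Fintype Y] [DecidableEq Y]
    [AddCommGroup Y] (P P' : Set (X → Option Y)) (k : ℕ) (X₀ : Set X) : ℝ :=
  sSup {v : ℝ | ∃ (x : Fin k → X) (c : Fin k → AddChar Y ℂ) (D : X → Option Y),
    Function.Injective x ∧ (∀ i, x i ∈ X₀) ∧
    v = ‖(toOp (projMat (P' ∩ agreeOff D x))).comp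
          ((toOp (cOparMat x c)).comp (toOp (projMat (P ∩ agreeOff D x))))‖}

end

/-- `PRMG`: databases containing a `0`-preimage -/
def PRMG {X Y : Type*} [AddCommGroup Y] : Set (X → Option Y) :=
  {D | ∃ a : X, D a = some 0}


/-!
Split `PRMG ∩ D|^x` according to the first queried register `x i` holding `0`. The pieces are
disjoint, so by the C⋆-identity the squared norm of `PRMG|_{D|^x} ∘ cO_{x,ŷ} ∘ ¬PRMG|_{D|^x}`
is at most the sum of the `k` squared norms of the pieces. On the `i`-th piece only the factor
`cO_{ŷ i}` at `x i` matters: the other factors are unitaries commuting with the projections at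
`x i`, so the piece is bounded by `‖π cO ρ‖`, where `π` projects onto `e_0` and `ρ = 1 - π`.
As `cO` is unitary, `(π cO ρ)(π cO ρ)⋆ = (1 - |z|²) π` with
`z = ⟨e_0, cO e_0⟩ = 1 - 1/M + M⁻² ∑ ŷ`, which is `1` or `1 - 1/M` by orthogonality of
characters. Hence each piece has squared norm at most `2/M`, and the capacity is at most
`√(2k/M)`.
-/

open Matrix

theorem CStarRing.norm_sum_sq_le {E : Type*} [NormedRing E] [StarRing E] [CStarRing E]
    {κ : Type*} [Fintype κ] (b : κ → E) (h : Pairwise fun i j => star (b i) * b j = 0) :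
    ‖∑ i, b i‖ ^ 2 ≤ ∑ i, ‖b i‖ ^ 2 := by
  have hdiag : star (∑ i, b i) * ∑ i, b i = ∑ i, star (b i) * b i := by
    rw [star_sum, Finset.sum_mul]
    refine Finset.sum_congr rfl fun i _ => ?_
    rw [Finset.mul_sum, Finset.sum_eq_single i (fun j _ hji => h hji.symm) (by simp)]
  calc ‖∑ i, b i‖ ^ 2 = ‖∑ i, star (b i) * b i‖ := by
        rw [← hdiag, CStarRing.norm_star_mul_self, sq]
    _ ≤ ∑ i, ‖star (b i) * b i‖ := norm_sum_le _ _
    _ = ∑ i, ‖b i‖ ^ 2 := by simp only [CStarRing.norm_star_mul_self, sq]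

theorem IsStarProjection.mul_mul_one_sub_mul_star {A : Type*} [Ring A] [StarRing A]
    [Algebra ℂ A] [StarModule ℂ A] {p u : A} (hp : IsStarProjection p) (hu : u ∈ unitary A)
    {z : ℂ} (hz : p * u * p = z • p) :
    p * u * (1 - p) * star (p * u * (1 - p)) = (1 - z * star z) • p := by
  have hpp : p * p = p := hp.isIdempotentElem.eq
  have hz' : p * star u * p = star z • p := by
    simpa [star_mul, hp.isSelfAdjoint.star_eq, mul_assoc] using congrArg star hz
  calc p * u * (1 - p) * star (p * u * (1 - p))
      = p * u * ((1 - p) * (1 - p)) * star u * p := by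
        simp only [star_mul, star_sub, star_one, hp.isSelfAdjoint.star_eq, mul_assoc]
    _ = p * (u * star u) * p - (p * u * p) * (p * star u * p) := by
        rw [hp.one_sub.isIdempotentElem.eq,
          show p * u * p * (p * star u * p) = p * u * (p * p) * star u * p by noncomm_ring, hpp]
        noncomm_ring
    _ = (1 - z * star z) • p := by
        rw [Unitary.mul_star_self_of_mem hu, mul_one, hpp, hz, hz', smul_mul_smul, hpp,
          sub_smul, one_smul]

theorem Fintype.sum_ite_forall_ne_eq {α β M : Type*} [DecidableEq α] [Fintype α] [Fintype β]
    [DecidableEq β] [AddCommMonoid M] (a₀ : α) (g : α → β) (f : (α → β) → M) :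
    ∑ h : α → β, (if ∀ a, a ≠ a₀ → g a = h a then f h else 0) =
      ∑ b, f (Function.update g a₀ b) := by
  rw [← Finset.sum_filter]
  have hfilter : Finset.univ.filter (fun h : α → β => ∀ a, a ≠ a₀ → g a = h a) =
      Finset.univ.image (Function.update g a₀) := by
    ext h
    simp [Function.update_eq_iff]
  rw [hfilter, Finset.sum_image fun b _ b' _ hb => Function.update_injective g a₀ hb]

section Projections

variable {ι : Type*} [DecidableEq ι]

theorem projMat_eq_diagonal (S : Set ι) [DecidablePred (· ∈ S)] :
    projMat S = diagonal fun i => if i ∈ S then 1 else 0 := by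
  ext i j
  simp only [projMat, of_apply, diagonal_apply]
  split_ifs <;> simp_all

theorem projMat_empty : projMat (∅ : Set ι) = 0 := by
  classical simp [projMat_eq_diagonal]

theorem projMat_univ : projMat (Set.univ : Set ι) = 1 := by
  classical simp [projMat_eq_diagonal]

theorem projMat_compl (S : Set ι) : projMat Sᶜ = 1 - projMat S := by
  classical
  rw [projMat_eq_diagonal, projMat_eq_diagonal, ← diagonal_one, diagonal_sub]
  congr 1; funext i; by_cases h : i ∈ S <;> simp [h]

theorem projMat_iUnion {κ : Type*} [Fintype κ] (S : κ → Set ι)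
    (hS : Pairwise fun a b => Disjoint (S a) (S b)) :
    projMat (⋃ a, S a) = ∑ a, projMat (S a) := by
  classical
  ext i j
  simp only [projMat_eq_diagonal, Matrix.sum_apply, diagonal_apply]
  by_cases hij : i = j
  · subst hij
    by_cases hi : ∃ a, i ∈ S a
    · obtain ⟨a, ha⟩ := hi
      rw [Finset.sum_eq_single a (fun b _ hb => by simp [(hS hb).notMem_of_mem_right ha])
        (by simp)]
      simp [ha, Set.mem_iUnion.2 ⟨a, ha⟩]
    · simp_all
  · simp [hij]

variable [Fintype ι]

theorem projMat_mul_projMat (S T : Set ι) : projMat S * projMat T = projMat (S ∩ T) := by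
  classical
  simp only [projMat_eq_diagonal, diagonal_mul_diagonal]
  congr 1; funext i; by_cases hS : i ∈ S <;> by_cases hT : i ∈ T <;> simp [hS, hT]

theorem isStarProjection_projMat (S : Set ι) : IsStarProjection (projMat S) := by
  refine ⟨by rw [IsIdempotentElem, projMat_mul_projMat, Set.inter_self], ?_⟩
  classical
  rw [projMat_eq_diagonal, IsSelfAdjoint, star_eq_conjTranspose, diagonal_conjTranspose]
  congr 1; funext i; by_cases h : i ∈ S <;> simp [h]

theorem projMat_singleton_mul_mul_projMat_singleton (m : Matrix ι ι ℂ) (i : ι) :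
    projMat {i} * m * projMat {i} = m i i • projMat {i} := by
  ext a b
  simp only [projMat_eq_diagonal, diagonal_mul, mul_diagonal, Matrix.smul_apply, diagonal_apply,
    Set.mem_singleton_iff, smul_eq_mul]
  by_cases ha : a = i <;> by_cases hb : b = i <;> simp_all [eq_comm]

end Projections

section Operators

variable {ι : Type*} [Fintype ι] [DecidableEq ι]

theorem toOp_eq_toEuclideanCLM (m : Matrix ι ι ℂ) :
    toOp m = toEuclideanCLM (n := ι) (𝕜 := ℂ) m := rfl

theorem toOp_mul (A B : Matrix ι ι ℂ) : toOp (A * B) = toOp A * toOp B := by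
  simp only [toOp_eq_toEuclideanCLM, map_mul]

theorem toOp_zero : toOp (0 : Matrix ι ι ℂ) = 0 := by
  simp only [toOp_eq_toEuclideanCLM, map_zero]

theorem toOp_conjTranspose (m : Matrix ι ι ℂ) : toOp mᴴ = star (toOp m) := by
  simp only [toOp_eq_toEuclideanCLM, ← map_star, star_eq_conjTranspose]

theorem toOp_smul (s : ℂ) (m : Matrix ι ι ℂ) : toOp (s • m) = s • toOp m := by
  simp only [toOp_eq_toEuclideanCLM, map_smul]

theorem toOp_mem_unitary {m : Matrix ι ι ℂ} (hm : m ∈ unitary (Matrix ι ι ℂ)) :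
    toOp m ∈ unitary (EuclideanSpace ℂ ι →L[ℂ] EuclideanSpace ℂ ι) := by
  rw [toOp_eq_toEuclideanCLM]
  exact Unitary.map_mem _ hm

theorem norm_toOp_projMat_le (S : Set ι) : ‖toOp (projMat S)‖ ≤ 1 := by
  rw [toOp_eq_toEuclideanCLM]
  exact ((isStarProjection_projMat S).map toEuclideanCLM).norm_le

theorem norm_toOp_projMat_mul_mul_projMat_le {S S' P P' : Set ι} (hS : S ⊆ S') (hP : P ⊆ P')
    (C : Matrix ι ι ℂ) :
    ‖toOp (projMat S * C * projMat P)‖ ≤ ‖toOp (projMat S' * C * projMat P')‖ := by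
  have hfactor : projMat S * C * projMat P =
      projMat S * (projMat S' * C * projMat P') * projMat P := by
    simp only [← mul_assoc]
    rw [projMat_mul_projMat, Set.inter_eq_left.2 hS, mul_assoc _ (projMat P'),
      projMat_mul_projMat, Set.inter_eq_right.2 hP]
  calc ‖toOp (projMat S * C * projMat P)‖
      ≤ ‖toOp (projMat S)‖ * ‖toOp (projMat S' * C * projMat P')‖ * ‖toOp (projMat P)‖ := by
        rw [hfactor, toOp_mul, toOp_mul]; exact norm_mul₃_le
    _ ≤ 1 * ‖toOp (projMat S' * C * projMat P')‖ * 1 := by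
        gcongr <;> exact norm_toOp_projMat_le _
    _ = ‖toOp (projMat S' * C * projMat P')‖ := by ring

theorem star_toOp_projMat_mul_mul_toOp_projMat_mul {S T : Set ι} (h : Disjoint S T)
    (A B : Matrix ι ι ℂ) : star (toOp (projMat S * A)) * toOp (projMat T * B) = 0 := by
  rw [← toOp_conjTranspose, ← toOp_mul, conjTranspose_mul, ← star_eq_conjTranspose (projMat S),
    (isStarProjection_projMat S).isSelfAdjoint.star_eq, mul_assoc, ← mul_assoc (projMat S),
    projMat_mul_projMat, h.inter_eq, projMat_empty, zero_mul, mul_zero, toOp_zero]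

end Operators

section Registers

variable {X Y : Type*} [Fintype X] [DecidableEq X] [DecidableEq Y]

theorem liftMat_conjTranspose (x₀ : X) (m : Matrix (Option Y) (Option Y) ℂ) :
    (liftMat x₀ m)ᴴ = liftMat x₀ mᴴ := by
  ext D' D
  simp only [conjTranspose_apply, liftMat, of_apply]
  have hsymm : (∀ a, a ≠ x₀ → D a = D' a) ↔ ∀ a, a ≠ x₀ → D' a = D a :=
    forall₂_congr fun _ _ => eq_comm
  simp only [hsymm]
  split_ifs <;> simp

theorem liftMat_smul (x₀ : X) (s : ℂ) (m : Matrix (Option Y) (Option Y) ℂ) :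
    liftMat x₀ (s • m) = s • liftMat x₀ m := by
  ext D' D
  simp only [liftMat, of_apply, Matrix.smul_apply]
  split_ifs <;> simp

theorem projMat_setOf_apply_mem (x₀ : X) (A : Set (Option Y)) :
    projMat {D : X → Option Y | D x₀ ∈ A} = liftMat x₀ (projMat A) := by
  classical
  ext D' D
  simp only [projMat_eq_diagonal, diagonal_apply, liftMat, of_apply, Set.mem_ofPred_eq]
  by_cases hD : ∀ a, a ≠ x₀ → D' a = D a
  · have hext : D' = D ↔ D' x₀ = D x₀ :=
      ⟨fun h => congrFun h x₀, fun h => funext fun a => if ha : a = x₀ then ha ▸ h else hD a ha⟩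
    simp only [if_pos hD, hext]
  · have hne : D' ≠ D := fun h => hD fun a _ => congrFun h a
    simp [hD, hne]

theorem liftMat_one (x₀ : X) : liftMat x₀ (1 : Matrix (Option Y) (Option Y) ℂ) = 1 := by
  rw [← projMat_univ, ← projMat_setOf_apply_mem]
  simp [projMat_univ]

variable [Fintype Y]

theorem liftMat_mul (x₀ : X) (m m' : Matrix (Option Y) (Option Y) ℂ) :
    liftMat x₀ m * liftMat x₀ m' = liftMat x₀ (m * m') := by
  ext D' D
  simp only [mul_apply, liftMat, of_apply, ite_zero_mul]
  rw [Fintype.sum_ite_forall_ne_eq]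
  simp +contextual only [Function.update_self, ne_eq, not_false_eq_true, Function.update_of_ne]
  split_ifs <;> simp

theorem liftMat_mem_unitary (x₀ : X) {m : Matrix (Option Y) (Option Y) ℂ}
    (hm : m ∈ unitary (Matrix (Option Y) (Option Y) ℂ)) :
    liftMat x₀ m ∈ unitary (Matrix (X → Option Y) (X → Option Y) ℂ) := by
  rw [← unitaryGroup, mem_unitaryGroup_iff, star_eq_conjTranspose] at hm ⊢
  rw [liftMat_conjTranspose, liftMat_mul, hm, liftMat_one]

theorem liftMat_mul_liftMat_of_ne {x₀ x₁ : X} (hne : x₀ ≠ x₁)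
    (m m' : Matrix (Option Y) (Option Y) ℂ) :
    liftMat x₀ m * liftMat x₁ m' = of fun D' D =>
      if ∀ a, a ≠ x₀ → a ≠ x₁ → D' a = D a
      then m (D' x₀) (D x₀) * m' (D' x₁) (D x₁) else 0 := by
  ext D' D
  simp only [mul_apply, liftMat, of_apply, ite_zero_mul]
  rw [Fintype.sum_ite_forall_ne_eq]
  have hcond : ∀ b, (∀ a, a ≠ x₁ → Function.update D' x₀ b a = D a) ↔
      b = D x₀ ∧ ∀ a, a ≠ x₀ → a ≠ x₁ → D' a = D a := by
    intro b
    constructor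
    · intro h
      refine ⟨by simpa using h x₀ hne, fun a h₀ h₁ => ?_⟩
      simpa [Function.update_of_ne h₀] using h a h₁
    · rintro ⟨rfl, h⟩ a h₁
      by_cases h₀ : a = x₀
      · simp [h₀]
      · simpa [Function.update_of_ne h₀] using h a h₀ h₁
  simp only [hcond, Function.update_self, Function.update_of_ne hne.symm, ite_and]
  split_ifs <;> simp

theorem liftMat_commute {x₀ x₁ : X} (hne : x₀ ≠ x₁) (m m' : Matrix (Option Y) (Option Y) ℂ) :
    Commute (liftMat x₀ m) (liftMat x₁ m') := by
  rw [Commute, SemiconjBy, liftMat_mul_liftMat_of_ne hne, liftMat_mul_liftMat_of_ne hne.symm]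
  ext D' D
  simp only [of_apply]
  have hswap : (∀ a, a ≠ x₀ → a ≠ x₁ → D' a = D a) ↔ ∀ a, a ≠ x₁ → a ≠ x₀ → D' a = D a :=
    forall_congr' fun _ => Imp.swap
  simp only [hswap, mul_comm]

theorem norm_toOp_liftMat_sq_le (x₀ : X) {q : Matrix (Option Y) (Option Y) ℂ} {s : ℂ}
    {A : Set (Option Y)} (h : q * qᴴ = s • projMat A) :
    ‖toOp (liftMat x₀ q)‖ ^ 2 ≤ ‖s‖ :=
  calc ‖toOp (liftMat x₀ q)‖ ^ 2 = ‖toOp (liftMat x₀ q) * star (toOp (liftMat x₀ q))‖ := by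
        rw [sq]; exact CStarRing.norm_self_mul_star.symm
    _ = ‖s • toOp (projMat {D : X → Option Y | D x₀ ∈ A})‖ := by
        rw [← toOp_conjTranspose, ← toOp_mul, liftMat_conjTranspose, liftMat_mul, h, liftMat_smul,
          projMat_setOf_apply_mem, toOp_smul]
    _ ≤ ‖s‖ := by
        rw [norm_smul]; exact mul_le_of_le_one_right (norm_nonneg _) (norm_toOp_projMat_le _)

end Registers

section CompressedOracle

variable {Y : Type*} [Fintype Y]

/-- `Comp = 1 - w wᵀ` is the reflection in `w`, a real vector with `‖w‖² = 2`. -/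
noncomputable def compAxis (Y : Type*) [Fintype Y] : Option Y → ℂ :=
  fun u => u.elim 1 fun _ => -((Real.sqrt (Fintype.card Y) : ℝ) : ℂ)⁻¹

theorem inv_sqrt_card_mul_inv_sqrt_card :
    ((Real.sqrt (Fintype.card Y) : ℝ) : ℂ)⁻¹ * ((Real.sqrt (Fintype.card Y) : ℝ) : ℂ)⁻¹ =
      ((Fintype.card Y : ℕ) : ℂ)⁻¹ := by
  rw [← mul_inv, ← Complex.ofReal_mul, Real.mul_self_sqrt (Nat.cast_nonneg _)]
  push_cast; rfl

theorem compAxis_dotProduct_self [Nonempty Y] : compAxis Y ⬝ᵥ compAxis Y = 2 := by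
  have hM : ((Fintype.card Y : ℕ) : ℂ) ≠ 0 := by simp [Fintype.card_ne_zero]
  simp only [dotProduct, compAxis, Fintype.sum_option, Option.elim_none, Option.elim_some,
    mul_one, neg_mul_neg, inv_sqrt_card_mul_inv_sqrt_card, Finset.sum_const, Finset.card_univ,
    nsmul_eq_mul, mul_inv_cancel₀ hM]
  norm_num

variable [DecidableEq Y]

theorem compMat_eq_one_sub_vecMulVec :
    compMat Y = 1 - vecMulVec (compAxis Y) (compAxis Y) := by
  ext (_ | a) (_ | b) <;>
    simp [compMat, compAxis, vecMulVec_apply, one_apply, inv_sqrt_card_mul_inv_sqrt_card]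

theorem compMat_mul_self [Nonempty Y] : compMat Y * compMat Y = 1 := by
  have hW : vecMulVec (compAxis Y) (compAxis Y) * vecMulVec (compAxis Y) (compAxis Y) =
      (2 : ℂ) • vecMulVec (compAxis Y) (compAxis Y) := by
    rw [vecMulVec_mul_vecMulVec, compAxis_dotProduct_self, vecMulVec_smul]
  rw [compMat_eq_one_sub_vecMulVec, sub_mul, mul_sub, mul_sub, hW, two_smul]
  simp only [one_mul, mul_one]
  abel

theorem compMat_conjTranspose : (compMat Y)ᴴ = compMat Y := by
  have hw : star (compAxis Y) = compAxis Y := by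
    funext u; cases u <;> simp [compAxis, Complex.conj_ofReal]
  rw [compMat_eq_one_sub_vecMulVec, conjTranspose_sub, conjTranspose_one,
    conjTranspose_vecMulVec, hw]

theorem compMat_mem_unitary [Nonempty Y] :
    compMat Y ∈ unitary (Matrix (Option Y) (Option Y) ℂ) := by
  rw [← unitaryGroup, mem_unitaryGroup_iff, star_eq_conjTranspose, compMat_conjTranspose,
    compMat_mul_self]

variable [AddCommGroup Y]

theorem oMat_mem_unitary (c : AddChar Y ℂ) : oMat c ∈ unitary (Matrix (Option Y) (Option Y) ℂ) := by
  rw [← unitaryGroup, mem_unitaryGroup_iff, star_eq_conjTranspose, oMat, diagonal_conjTranspose,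
    diagonal_mul_diagonal, ← diagonal_one]
  congr 1
  funext u
  cases u with
  | none => simp
  | some r =>
    have : c r ≠ 0 := norm_ne_zero_iff.1 (by simp [AddChar.norm_apply])
    simp [← AddChar.inv_apply_eq_conj, this]

theorem cOMat_mem_unitary (c : AddChar Y ℂ) : cOMat c ∈ unitary (Matrix (Option Y) (Option Y) ℂ) :=
  mul_mem (mul_mem compMat_mem_unitary (oMat_mem_unitary c)) compMat_mem_unitary

-- `0 : AddChar Y ℂ` is the trivial character.
theorem cOMat_apply_some_zero_some_zero (c : AddChar Y ℂ) :
    cOMat c (some 0) (some 0) = if c = 0 then 1 else 1 - ((Fintype.card Y : ℕ) : ℂ)⁻¹ := by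
  rw [cOMat, oMat, mul_apply, Fintype.sum_option]
  simp only [mul_diagonal, compMat, of_apply, Option.elim, mul_one,
    inv_sqrt_card_mul_inv_sqrt_card]
  set a : ℂ := ((Fintype.card Y : ℕ) : ℂ)⁻¹
  have hterm : ∀ r : Y, ((if (0 : Y) = r then 1 else 0) - a) * c r * ((if r = 0 then 1 else 0) - a)
      = (if r = 0 then 1 - 2 * a else 0) + a ^ 2 * c r := by
    intro r
    by_cases hr : r = 0
    · subst hr; simp only [↓reduceIte, AddChar.map_zero_eq_one, mul_one]; ring
    · simp only [hr, Ne.symm hr, ↓reduceIte, zero_sub, zero_add, neg_mul, mul_neg, neg_neg]; ring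
  simp only [hterm, Finset.sum_add_distrib, Finset.sum_ite_eq', Finset.mem_univ, if_true,
    ← Finset.mul_sum, AddChar.sum_eq_ite]
  have ha : a * (Fintype.card Y : ℕ) = 1 := inv_mul_cancel₀ (by simp [Fintype.card_ne_zero])
  split_ifs
  · linear_combination a * ha
  · ring

theorem norm_one_sub_cOMat_mul_star_le (c : AddChar Y ℂ) :
    ‖1 - cOMat c (some 0) (some 0) * star (cOMat c (some 0) (some 0))‖ ≤
      2 / Fintype.card Y := by
  rw [cOMat_apply_some_zero_some_zero]
  split_ifs
  · simp only [mul_one, star_one, sub_self, norm_zero]; positivity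
  · have hb : 0 < (Fintype.card Y : ℝ)⁻¹ := by simp [Fintype.card_pos]
    have hb1 : (Fintype.card Y : ℝ)⁻¹ ≤ 1 :=
      inv_le_one_of_one_le₀ (by simp [Nat.one_le_iff_ne_zero])
    have hreal :
        1 - (1 - ((Fintype.card Y : ℕ) : ℂ)⁻¹) * star (1 - ((Fintype.card Y : ℕ) : ℂ)⁻¹) =
          (((Fintype.card Y : ℝ)⁻¹ * (2 - (Fintype.card Y : ℝ)⁻¹) : ℝ) : ℂ) := by
      simp only [star_sub, star_one, star_inv₀, star_natCast]; push_cast; ring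
    rw [hreal, Complex.norm_real, Real.norm_of_nonneg (by nlinarith), div_eq_mul_inv]
    nlinarith

end CompressedOracle

section ParallelQuery

variable {X Y : Type*} [Fintype X] [DecidableEq X] [Fintype Y] [DecidableEq Y] [AddCommGroup Y]

theorem norm_toOp_liftMat_projMat_mul_cOMat_mul_projMat_compl_sq_le (x₀ : X)
    (c : AddChar Y ℂ) :
    ‖toOp (liftMat (Y := Y) x₀ (projMat {some 0} * cOMat c * projMat {some 0}ᶜ))‖ ^ 2 ≤
      2 / Fintype.card Y := by
  have hrank : projMat {some 0} * cOMat c * projMat {some 0}ᶜ *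
      (projMat {some 0} * cOMat c * projMat {some 0}ᶜ)ᴴ =
      (1 - cOMat c (some 0) (some 0) * star (cOMat c (some 0) (some 0))) • projMat {some 0} := by
    rw [← star_eq_conjTranspose, projMat_compl]
    exact (isStarProjection_projMat _).mul_mul_one_sub_mul_star (cOMat_mem_unitary c)
      (projMat_singleton_mul_mul_projMat_singleton _ _)
  exact (norm_toOp_liftMat_sq_le x₀ hrank).trans (norm_one_sub_cOMat_mul_star_le c)

variable {k : ℕ} {x : Fin k → X}

theorem exists_cOparMat_eq_liftMat_mul (hx : Function.Injective x) (c : Fin k → AddChar Y ℂ)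
    (i : Fin k) :
    ∃ R ∈ unitary (Matrix (X → Option Y) (X → Option Y) ℂ),
      (∀ m, Commute (liftMat (x i) m) R) ∧ cOparMat x c = liftMat (x i) (cOMat (c i)) * R := by
  set l := List.ofFn fun j => liftMat (x j) (cOMat (c j))
  have hi : (i : ℕ) < l.length := by simp [l]
  have hmem : ∀ r ∈ l.eraseIdx i, ∃ j ≠ i, r = liftMat (x j) (cOMat (c j)) := by
    intro r hr
    obtain ⟨j, hj, hji, rfl⟩ := List.mem_eraseIdx_iff_getElem.1 hr
    exact ⟨⟨j, by simpa [l] using hj⟩, fun h => hji (congrArg Fin.val h), by simp [l]⟩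
  refine ⟨(l.eraseIdx i).prod, list_prod_mem fun r hr => ?_, fun m => ?_, ?_⟩
  · obtain ⟨j, -, rfl⟩ := hmem r hr
    exact liftMat_mem_unitary _ (cOMat_mem_unitary _)
  · refine Commute.list_prod_right _ _ fun r hr => ?_
    obtain ⟨j, hj, rfl⟩ := hmem r hr
    exact liftMat_commute (hx.ne hj.symm) _ _
  · have hcomm : l.Pairwise Commute :=
      List.pairwise_ofFn.2 fun j j' hjj' => liftMat_commute (hx.ne hjj'.ne) _ _
    rw [cOparMat, (List.getElem_cons_eraseIdx_perm hi).symm.prod_eq' hcomm, List.prod_cons]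
    simp [l]

theorem norm_toOp_projMat_setOf_mul_cOparMat_mul_projMat_setOf_sq_le (hx : Function.Injective x)
    (c : Fin k → AddChar Y ℂ) (i : Fin k) :
    ‖toOp (projMat {D : X → Option Y | D (x i) ∈ ({some 0} : Set (Option Y))} * cOparMat x c *
      projMat {D : X → Option Y | D (x i) ∈ ({some 0}ᶜ : Set (Option Y))})‖ ^ 2 ≤
      2 / Fintype.card Y := by
  obtain ⟨R, hR, hRcomm, hsplit⟩ := exists_cOparMat_eq_liftMat_mul hx c i
  have hfactor : projMat {D : X → Option Y | D (x i) ∈ ({some 0} : Set (Option Y))} *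
      cOparMat x c * projMat {D : X → Option Y | D (x i) ∈ ({some 0}ᶜ : Set (Option Y))} =
      liftMat (x i) (projMat {some 0} * cOMat (c i) * projMat {some 0}ᶜ) * R := by
    rw [projMat_setOf_apply_mem, projMat_setOf_apply_mem, hsplit, ← liftMat_mul, ← liftMat_mul]
    simp only [mul_assoc]
    rw [(hRcomm _).eq]
  rw [hfactor, toOp_mul, CStarRing.norm_mul_mem_unitary _ (toOp_mem_unitary hR)]
  exact norm_toOp_liftMat_projMat_mul_cOMat_mul_projMat_compl_sq_le _ _

theorem norm_toOp_projMat_mul_cOparMat_mul_projMat_sq_le (hx : Function.Injective x)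
    (c : Fin k → AddChar Y ℂ) {P P' : Set (X → Option Y)}
    (hP : ∀ D ∈ P, ∀ i, D (x i) ≠ some 0) (hP' : ∀ D ∈ P', ∃ i, D (x i) = some 0) :
    ‖toOp (projMat P' * cOparMat x c * projMat P)‖ ^ 2 ≤ k * (2 / Fintype.card Y) := by
  set T : Fin k → Set (X → Option Y) := fun i => {D | D (x i) ∈ ({some 0} : Set (Option Y))}
  set S : Fin k → Set (X → Option Y) := fun i => P' ∩ disjointed T i
  have hS : P' = ⋃ i, S i := by
    rw [← Set.inter_iUnion, iUnion_disjointed, Set.inter_eq_left.2]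
    intro D hD
    simpa [T] using hP' D hD
  have hdisj : Pairwise fun i j => Disjoint (S i) (S j) := fun i j hij =>
    (disjoint_disjointed T hij).mono Set.inter_subset_right Set.inter_subset_right
  have horth : Pairwise fun i j => star (toOp (projMat (S i) * cOparMat x c * projMat P)) *
      toOp (projMat (S j) * cOparMat x c * projMat P) = 0 := fun i j hij => by
    simpa only [mul_assoc] using star_toOp_projMat_mul_mul_toOp_projMat_mul (hdisj hij) _ _
  have hterm : ∀ i, ‖toOp (projMat (S i) * cOparMat x c * projMat P)‖ ^ 2 ≤
      2 / Fintype.card Y := fun i =>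
    (pow_le_pow_left₀ (norm_nonneg _) (norm_toOp_projMat_mul_mul_projMat_le
      ((disjointed_subset T i).trans' Set.inter_subset_right) (fun D hD => hP D hD i) _) 2).trans
      (norm_toOp_projMat_setOf_mul_cOparMat_mul_projMat_setOf_sq_le hx c i)
  calc ‖toOp (projMat P' * cOparMat x c * projMat P)‖ ^ 2
      = ‖∑ i, toOp (projMat (S i) * cOparMat x c * projMat P)‖ ^ 2 := by
        rw [hS, projMat_iUnion S hdisj, Finset.sum_mul, Finset.sum_mul, toOp_eq_toEuclideanCLM,
          map_sum]
        rfl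
    _ ≤ ∑ i, ‖toOp (projMat (S i) * cOparMat x c * projMat P)‖ ^ 2 :=
        CStarRing.norm_sum_sq_le _ horth
    _ ≤ ∑ _i : Fin k, 2 / (Fintype.card Y : ℝ) := Finset.sum_le_sum fun i _ => hterm i
    _ = k * (2 / Fintype.card Y) := by simp

end ParallelQuery

theorem stmt_13_general {X Y : Type*} [Fintype X] [DecidableEq X]
    [Fintype Y] [DecidableEq Y] [AddCommGroup Y]
    (k : ℕ) :
    qtc (X := X) (Y := Y) PRMGᶜ PRMG k Set.univ
      ≤ Real.sqrt (10 * k / Fintype.card Y) := by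
  refine Real.sSup_le ?_ (Real.sqrt_nonneg _)
  rintro _ ⟨x, c, D, hx, -, rfl⟩
  simp only [← ContinuousLinearMap.mul_def, ← toOp_mul, ← mul_assoc]
  by_cases hD : ∃ a, (∀ i, x i ≠ a) ∧ D a = some 0
  · obtain ⟨a, ha, hDa⟩ := hD
    have hempty : PRMGᶜ ∩ agreeOff D x = ∅ :=
      Set.eq_empty_of_forall_notMem fun E hE => hE.1 ⟨a, (hE.2 a ha).trans hDa⟩
    rw [hempty, projMat_empty, mul_zero, toOp_zero, norm_zero]
    exact Real.sqrt_nonneg _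
  push Not at hD
  refine Real.le_sqrt_of_sq_le
    ((norm_toOp_projMat_mul_cOparMat_mul_projMat_sq_le hx c ?_ ?_).trans ?_)
  · exact fun E hE i h => hE.1 ⟨x i, h⟩
  · rintro E ⟨⟨a, ha⟩, hE⟩
    by_contra! h
    have hax : ∀ i, x i ≠ a := fun i hi => h i (hi ▸ ha)
    exact hD a hax ((hE a hax).symm.trans ha)
  · rw [mul_div_assoc', mul_comm]
    gcongr
    norm_num

theorem stmt_13 {X Y : Type*} [Fintype X] [DecidableEq X] [Nonempty X]
    [Fintype Y] [DecidableEq Y] [AddCommGroup Y]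
    (k : ℕ) (hk : 1 ≤ k) :
    qtc (X := X) (Y := Y) PRMGᶜ PRMG k Set.univ
      ≤ Real.sqrt (10 * k / Fintype.card Y) :=
  stmt_13_general k
end

section
/- Let D be a PoSW database with no collisions, let ξ_1, …, ξ_k be pairwise distinct inputs and u_1, …, u_k ∈ {0,1}^w ∪ {⊥}, and let D' := D[ξ↦u] be the updated database. Let φ ∈ {0,1}^w and let v be a leaf (|v| = n). Suppose there is a function ℓ' : V_n → {0,1}^w with ℓ'(rt) = φ and ℓ'(z) = D'(z, ℓ'_{in(z)}) for all z ∈ anc(v), while there is no function ℓ'' : V_n → {0,1}^w with ℓ''(rt) = φ and ℓ''(z) = D(z, ℓ''_{in(z)}) for all z ∈ anc(v). Then there exist j ∈ {1,…,k} and z ∈ anc(v) such that D(ξ_j) ≠ D'(ξ_j) = ℓ'(z). -/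
/- Vertices of the Simple PoSW DAG are binary strings (lists of booleans) of length ≤ n.
The root `rt` is the empty string. -/

/-- left child -/
def left (v : List Bool) : List Bool := v ++ [false]
/-- right child -/
def right (v : List Bool) : List Bool := v ++ [true]
/-- parent -/
def par (v : List Bool) : List Bool := v.dropLast
/-- sibling -/
def sib (v : List Bool) : List Bool := v.dropLast ++ [!v.getLast!]
/-- ancestors: `{par^[i] v : 0 ≤ i ≤ |v|}` -/
def anc (v : List Bool) : Set (List Bool) := {u | ∃ i ≤ v.length, u = par^[i] v}

/-- the inward neighborhood `in(v)` of `v` in the Simple PoSW DAG `G_n` -/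
def inSet (n : ℕ) (v : List Bool) : Set (List Bool) :=
  {u | (v.length < n ∧ (u = left v ∨ u = right v)) ∨
       ∃ z ∈ anc v, z ≠ [] ∧ z = right (par z) ∧ u = sib z}

/-- an input: a vertex `v ∈ V_n` together with a tuple of `w`-bit labels indexed by `in(v)` -/
structure PInput (n w : ℕ) where
  v : List Bool
  hv : v.length ≤ n
  lab : {u : List Bool // u ∈ inSet n v} → (Fin w → Bool)

/-- `D` has no collisions (beyond `⊥`) -/
def NoCollision {n w : ℕ} (D : PInput n w → Option (Fin w → Bool)) : Prop :=
  ∀ ξ ξ' : PInput n w, ξ ≠ ξ' → D ξ = D ξ' → D ξ = none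

/-- `ℓ(z) = D(z, ℓ_{in(z)})`, i.e. the labeling `ℓ` is consistent with `D` at the vertex `z`
(in particular the value is ≠ ⊥). -/
def consistentAt {n w : ℕ} (D : PInput n w → Option (Fin w → Bool))
    (ℓ : List Bool → Fin w → Bool) (z : List Bool) : Prop :=
  ∃ hz : z.length ≤ n, D ⟨z, hz, fun u => ℓ u.1⟩ = some (ℓ z)

theorem stmt_18 {n w : ℕ} (hn : 1 ≤ n) (hw : 1 ≤ w) (k : ℕ) (hk : 1 ≤ k)
    (D D' : PInput n w → Option (Fin w → Bool)) (hD : NoCollision D)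
    -- pairwise distinct inputs ξ_1, …, ξ_k and values u_1, …, u_k
    (ξ : Fin k → PInput n w) (hξ : Function.Injective ξ)
    (u : Fin k → Option (Fin w → Bool))
    -- D' = D[ξ↦u]
    (hD'1 : ∀ j, D' (ξ j) = u j)
    (hD'2 : ∀ η : PInput n w, (∀ j, η ≠ ξ j) → D' η = D η)
    (φ : Fin w → Bool)
    -- a leaf v
    (v : List Bool) (hv : v.length = n)
    -- v's ancestors are consistently labeled (w.r.t. D') by ℓ' with root label φ
    (ℓ' : List Bool → Fin w → Bool)
    (hℓ'1 : ℓ' [] = φ)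
    (hℓ'2 : ∀ z ∈ anc v, consistentAt D' ℓ' z)
    -- no labeling does the same for D
    (hno : ¬∃ ℓ'' : List Bool → Fin w → Bool,
      ℓ'' [] = φ ∧ ∀ z ∈ anc v, consistentAt D ℓ'' z) :
    ∃ (j : Fin k) (z : List Bool), z ∈ anc v ∧ D (ξ j) ≠ D' (ξ j) ∧
      D' (ξ j) = some (ℓ' z) := by
  by_contra hcon
  push_neg at hcon
  apply hno
  refine ⟨ℓ', hℓ'1, fun z hz => ?_⟩
  obtain ⟨hzn, hzD'⟩ := hℓ'2 z hz
  refine ⟨hzn, ?_⟩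
  set η : PInput n w := ⟨z, hzn, fun u => ℓ' u.1⟩ with hη
  by_cases heq : D η = D' η
  · rw [heq]; exact hzD'
  · by_cases hex : ∃ j, η = ξ j
    · obtain ⟨j, hj⟩ := hex
      exact absurd (hj ▸ hzD') (hcon j z hz (hj ▸ heq))
    · push_neg at hex
      exact absurd (hD'2 η hex).symm heq
end

section
/- Let q ≥ 1 and let D be a PoSW database containing no (q+1)-chain. Let T ⊆ V_n satisfy: rt ∈ T; if v ∈ T and v ≠ rt then par(v) ∈ T; and for every non-leaf v ∈ T, either both of left(v), right(v) lie in T or neither does. Suppose there is a labeling ℓ : T → {0,1}^w with ℓ(v) = D(v, ℓ_{in(v)}) (in particular D(v, ℓ_{in(v)}) ≠ ⊥) for every v ∈ T with in(v) ⊆ T. Then the number of leaves of T, i.e. |{v ∈ T : |v| = n}|, satisfies 2·|{v ∈ T : |v| = n}| ≤ q + 2. -/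
/-- `D` contains an `r`-chain: inputs `ξ_0, …, ξ_r` such that for `1 ≤ i ≤ r`,
`D ξ_{i-1} ≠ ⊥` and `D ξ_{i-1}` occurs as a component of the label tuple of `ξ_i`. -/
def HasChain {n w : ℕ} (D : PInput n w → Option (Fin w → Bool)) (r : ℕ) : Prop :=
  ∃ ξ : Fin (r + 1) → PInput n w, ∀ i : Fin r,
    ∃ y : Fin w → Bool, D (ξ i.castSucc) = some y ∧ ∃ uu, (ξ i.succ).lab uu = y

theorem par_iterate_eq_take (v : List Bool) (i : ℕ) : par^[i] v = v.take (v.length - i) := by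
  induction i with
  | zero => simp
  | succ i ih =>
    rw [Function.iterate_succ_apply', ih, par, List.dropLast_eq_take, List.take_take,
      List.length_take]
    congr 1
    omega

theorem mem_anc_iff_prefix {u v : List Bool} : u ∈ anc v ↔ u <+: v := by
  constructor
  · rintro ⟨i, -, rfl⟩
    rw [par_iterate_eq_take]
    exact List.take_prefix _ _
  · intro h
    refine ⟨v.length - u.length, Nat.sub_le _ _, ?_⟩
    rw [par_iterate_eq_take, Nat.sub_sub_self h.length_le]
    exact List.prefix_iff_eq_take.mp h

theorem List.IsPrefix.exists_append_singleton_prefix {α : Type*} {u v : List α} (h : u <+: v)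
    (hlt : u.length < v.length) : ∃ b, u ++ [b] <+: v := by
  obtain ⟨t, rfl⟩ := h
  cases t with
  | nil => simp at hlt
  | cons b t => exact ⟨b, t, by simp⟩

theorem append_singleton_mem_inSet {n : ℕ} {z : List Bool} (hz : z.length < n) (b : Bool) :
    z ++ [b] ∈ inSet n z :=
  Or.inl ⟨hz, by cases b <;> simp [left, right]⟩

theorem append_false_mem_inSet {n : ℕ} {z v : List Bool} (h : z ++ [true] <+: v) :
    z ++ [false] ∈ inSet n v :=
  Or.inr ⟨z ++ [true], mem_anc_iff_prefix.mpr h, by simp, by simp [right, par],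
    by simp [sib]⟩

section Subtree

variable {n : ℕ} {T : Set (List Bool)}

theorem mem_of_prefix (hpar : ∀ v ∈ T, v ≠ [] → par v ∈ T) {u v : List Bool} (hv : v ∈ T)
    (huv : u <+: v) : u ∈ T := by
  induction v using List.reverseRecOn with
  | nil => rwa [List.prefix_nil.mp huv]
  | append_singleton v a ih =>
    rcases List.prefix_concat_iff.mp huv with rfl | huv
    · exact hv
    · exact ih (by simpa [par] using hpar _ hv (by simp)) huv

theorem append_singleton_mem_of_sibling
    (hsib : ∀ v ∈ T, v.length < n → (left v ∈ T ↔ right v ∈ T)) {z : List Bool} (hz : z ∈ T)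
    (hzn : z.length < n) {b : Bool} (hb : z ++ [b] ∈ T) (b' : Bool) : z ++ [b'] ∈ T := by
  have := hsib z hz hzn
  cases b <;> cases b' <;> simp_all [left, right]

def leavesBelow (n : ℕ) (T : Set (List Bool)) (z : List Bool) : Set (List Bool) :=
  {v | v ∈ T ∧ v.length = n ∧ z <+: v}

theorem inSet_subset_of_mem_leavesBelow (hpar : ∀ v ∈ T, v ≠ [] → par v ∈ T)
    (hsib : ∀ v ∈ T, v.length < n → (left v ∈ T ↔ right v ∈ T)) {z v : List Bool}
    (hv : v ∈ leavesBelow n T z) : inSet n z ⊆ T := by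
  obtain ⟨hvT, hvn, hzv⟩ := hv
  rintro u (⟨hzn, hu⟩ | ⟨y, hy, -, hyr, rfl⟩)
  · obtain ⟨b, hb⟩ := hzv.exists_append_singleton_prefix (hvn ▸ hzn)
    have hbT := append_singleton_mem_of_sibling hsib (mem_of_prefix hpar hvT hzv) hzn
      (mem_of_prefix hpar hvT hb)
    rcases hu with rfl | rfl
    exacts [hbT false, hbT true]
  · obtain ⟨l, rfl⟩ : ∃ l, y = l ++ [true] := ⟨par y, hyr⟩
    have hyv := (mem_anc_iff_prefix.mp hy).trans hzv
    have hln : l.length < n := by simpa [← hvn] using hyv.length_le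
    have hlT : l ∈ T := mem_of_prefix hpar hvT ((List.prefix_append _ _).trans hyv)
    simpa [sib] using append_singleton_mem_of_sibling hsib hlT hln
      (mem_of_prefix hpar hvT hyv) false

theorem leavesBelow_finite (n : ℕ) (T : Set (List Bool)) (z : List Bool) :
    (leavesBelow n T z).Finite :=
  (List.finite_length_eq Bool n).subset fun _ hv => hv.2.1

theorem leavesBelow_eq_singleton {z : List Bool} (hz : z ∈ T) (hzn : z.length = n) :
    leavesBelow n T z = {z} := by
  ext v
  constructor
  · rintro ⟨-, hvn, hzv⟩
    exact (hzv.eq_of_length (hzn.trans hvn.symm)).symm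
  · rintro rfl
    exact ⟨hz, hzn, List.prefix_refl _⟩

theorem leavesBelow_eq_union {z : List Bool} (hzn : z.length < n) :
    leavesBelow n T z = leavesBelow n T (z ++ [false]) ∪ leavesBelow n T (z ++ [true]) := by
  ext v
  constructor
  · rintro ⟨hvT, hvn, hzv⟩
    obtain ⟨b, hb⟩ := hzv.exists_append_singleton_prefix (hvn ▸ hzn)
    cases b
    exacts [Or.inl ⟨hvT, hvn, hb⟩, Or.inr ⟨hvT, hvn, hb⟩]
  · rintro (⟨hvT, hvn, hb⟩ | ⟨hvT, hvn, hb⟩) <;>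
      exact ⟨hvT, hvn, (List.prefix_append _ _).trans hb⟩

theorem disjoint_leavesBelow_false_true (z : List Bool) :
    Disjoint (leavesBelow n T (z ++ [false])) (leavesBelow n T (z ++ [true])) := by
  rw [Set.disjoint_left]
  rintro v ⟨-, -, h0⟩ ⟨-, -, h1⟩
  have := (List.prefix_of_prefix_length_le h0 h1 (by simp)).eq_of_length (by simp)
  simp at this

theorem ncard_leavesBelow {z : List Bool} (hzn : z.length < n) :
    (leavesBelow n T z).ncard =
      (leavesBelow n T (z ++ [false])).ncard + (leavesBelow n T (z ++ [true])).ncard := by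
  rw [leavesBelow_eq_union hzn, Set.ncard_union_eq (disjoint_leavesBelow_false_true z)
    (leavesBelow_finite _ _ _) (leavesBelow_finite _ _ _)]

/-- A path in `G_n` that starts below `z` and ends at `z`, all of whose vertices have their
in-neighbourhood in `T`, so that the labeling is consistent with `D` along it. -/
structure IsPathTo (n : ℕ) (T : Set (List Bool)) (z : List Bool) (p : List (List Bool)) :
    Prop where
  isChain : p.IsChain fun u v => u ∈ inSet n v
  closed : ∀ x ∈ p, x ∈ T ∧ inSet n x ⊆ T
  getLast?_eq : p.getLast? = some z
  prefix_head : ∀ v ∈ p.head?, z <+: v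

namespace IsPathTo

variable {z : List Bool} {p : List (List Bool)}

theorem ne_nil (hp : IsPathTo n T z p) : p ≠ [] := by
  rintro rfl
  simpa using hp.getLast?_eq

theorem singleton (hz : z ∈ T) (hin : inSet n z ⊆ T) : IsPathTo n T z [z] :=
  ⟨List.isChain_singleton z, by simpa using ⟨hz, hin⟩, rfl, by simp⟩

theorem append {u : List Bool} {q : List (List Bool)} (hp : IsPathTo n T u p)
    (hq : IsPathTo n T z q) (hedge : ∀ v ∈ q.head?, u ∈ inSet n v) (hzu : z <+: u) :
    IsPathTo n T z (p ++ q) where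
  isChain := hp.isChain.append hq.isChain fun x hx => by
    rw [hp.getLast?_eq, Option.mem_some_iff] at hx
    exact hx ▸ hedge
  closed x hx := (List.mem_append.mp hx).elim (hp.closed x) (hq.closed x)
  getLast?_eq := by rw [List.getLast?_append_of_ne_nil _ hq.ne_nil, hq.getLast?_eq]
  prefix_head v hv := by
    rw [List.head?_append_of_ne_nil _ hp.ne_nil] at hv
    exact hzu.trans (hp.prefix_head v hv)

theorem append_parent {b : Bool} (hp : IsPathTo n T (z ++ [b]) p) (hzn : z.length < n)
    (hz : z ∈ T) (hin : inSet n z ⊆ T) : IsPathTo n T z (p ++ [z]) :=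
  hp.append (singleton hz hin) (by simpa using append_singleton_mem_inSet hzn b)
    (List.prefix_append _ _)

theorem append_children {p₀ p₁ : List (List Bool)} (hp₀ : IsPathTo n T (z ++ [false]) p₀)
    (hp₁ : IsPathTo n T (z ++ [true]) p₁) (hzn : z.length < n) (hz : z ∈ T)
    (hin : inSet n z ⊆ T) : IsPathTo n T z (p₀ ++ (p₁ ++ [z])) := by
  refine hp₀.append (hp₁.append_parent hzn hz hin) (fun v hv => ?_) (List.prefix_append _ _)
  rw [List.head?_append_of_ne_nil _ hp₁.ne_nil] at hv
  exact append_false_mem_inSet (hp₁.prefix_head v hv)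

end IsPathTo

theorem exists_isPathTo_two_mul_ncard_le (hpar : ∀ v ∈ T, v ≠ [] → par v ∈ T)
    (hsib : ∀ v ∈ T, v.length < n → (left v ∈ T ↔ right v ∈ T)) {z : List Bool}
    (hne : (leavesBelow n T z).Nonempty) :
    ∃ p, IsPathTo n T z p ∧ 2 * (leavesBelow n T z).ncard ≤ p.length + 1 := by
  obtain ⟨v, hv⟩ := hne
  have ⟨hvT, hvn, hzv⟩ := hv
  have hz : z ∈ T := mem_of_prefix hpar hvT hzv
  have hin : inSet n z ⊆ T := inSet_subset_of_mem_leavesBelow hpar hsib hv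
  rcases hvn ▸ hzv.length_le.lt_or_eq with hzn | hzn
  · have hcard := ncard_leavesBelow (T := T) hzn
    rcases (leavesBelow n T (z ++ [false])).eq_empty_or_nonempty with h₀ | h₀ <;>
      rcases (leavesBelow n T (z ++ [true])).eq_empty_or_nonempty with h₁ | h₁
    · simp [leavesBelow_eq_union hzn, h₀, h₁] at hv
    · obtain ⟨p, hp, hp_card⟩ := exists_isPathTo_two_mul_ncard_le hpar hsib h₁
      refine ⟨p ++ [z], hp.append_parent hzn hz hin, ?_⟩
      simp only [hcard, h₀, Set.ncard_empty, List.length_append, List.length_singleton]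
      omega
    · obtain ⟨p, hp, hp_card⟩ := exists_isPathTo_two_mul_ncard_le hpar hsib h₀
      refine ⟨p ++ [z], hp.append_parent hzn hz hin, ?_⟩
      simp only [hcard, h₁, Set.ncard_empty, List.length_append, List.length_singleton]
      omega
    · obtain ⟨p₀, hp₀, hp₀_card⟩ := exists_isPathTo_two_mul_ncard_le hpar hsib h₀
      obtain ⟨p₁, hp₁, hp₁_card⟩ := exists_isPathTo_two_mul_ncard_le hpar hsib h₁
      refine ⟨p₀ ++ (p₁ ++ [z]), hp₀.append_children hp₁ hzn hz hin, ?_⟩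
      simp only [hcard, List.length_append, List.length_singleton]
      omega
  · exact ⟨[z], .singleton hz hin, by simp [leavesBelow_eq_singleton hz hzn]⟩
termination_by n - z.length
decreasing_by all_goals simp only [List.length_append, List.length_singleton]; omega

end Subtree

theorem hasChain_of_isChain {n w : ℕ} {D : PInput n w → Option (Fin w → Bool)}
    {ℓ : List Bool → Fin w → Bool} {p : List (List Bool)}
    (hp : p.IsChain fun u v => u ∈ inSet n v) (hℓ : ∀ x ∈ p, consistentAt D ℓ x) {r : ℕ}
    (hr : r < p.length) : HasChain D r :=
  ⟨fun j => ⟨p[j.1], (hℓ _ (List.getElem_mem _)).fst, fun u => ℓ u.1⟩,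
    fun i => ⟨ℓ p[i.1], (hℓ _ (List.getElem_mem _)).snd, ⟨p[i.1], hp.getElem i (by omega)⟩, rfl⟩⟩

theorem stmt_19_general {n w : ℕ} (q : ℕ)
    (D : PInput n w → Option (Fin w → Bool)) (hD : ¬HasChain D (q + 1))
    (T : Set (List Bool))
    (hpar : ∀ v ∈ T, v ≠ [] → par v ∈ T)
    (hsib : ∀ v ∈ T, v.length < n → (left v ∈ T ↔ right v ∈ T))
    (ℓ : List Bool → Fin w → Bool)
    (hℓ : ∀ v ∈ T, inSet n v ⊆ T → consistentAt D ℓ v) :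
    2 * {v : List Bool | v ∈ T ∧ v.length = n}.ncard ≤ q + 2 := by
  have hleaves : {v : List Bool | v ∈ T ∧ v.length = n} = leavesBelow n T [] := by
    simp [leavesBelow]
  rw [hleaves]
  by_contra! hlarge
  have hne : (leavesBelow n T []).Nonempty := Set.nonempty_of_ncard_ne_zero (by omega)
  obtain ⟨p, hp, hp_card⟩ := exists_isPathTo_two_mul_ncard_le hpar hsib hne
  exact hD (hasChain_of_isChain hp.isChain (fun x hx => (hp.closed x hx).elim (hℓ x)) (by omega))

theorem stmt_19 {n w : ℕ} (hn : 1 ≤ n) (hw : 1 ≤ w) (q : ℕ) (hq : 1 ≤ q)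
    (D : PInput n w → Option (Fin w → Bool)) (hD : ¬HasChain D (q + 1))
    (T : Set (List Bool)) (hT : T ⊆ {v | v.length ≤ n})
    (hrt : [] ∈ T)
    (hpar : ∀ v ∈ T, v ≠ [] → par v ∈ T)
    (hsib : ∀ v ∈ T, v.length < n → (left v ∈ T ↔ right v ∈ T))
    (ℓ : List Bool → Fin w → Bool)
    (hℓ : ∀ v ∈ T, inSet n v ⊆ T → consistentAt D ℓ v) :
    2 * {v : List Bool | v ∈ T ∧ v.length = n}.ncard ≤ q + 2 :=
  stmt_19_general q D hD T hpar hsib ℓ hℓ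
end
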